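/- arXiv:2407.05613 — 7 statements merged into one kernel-verified Lean document; each statement's English description precedes it below -/
import Mathlib

section
/- For 1 ≤ p₁ ≤ p₂ ≤ q < ∞, the inclusion ℓ^{p₂}_q ⊆ ℓ^{p₁}_q holds, and ‖x‖_{ℓ^{p₁}_q} ≤ ‖x‖_{ℓ^{p₂}_q} for every x ∈ ℓ^{p₂}_q. -/
open scoped ENNReal BigOperators

/-- Discrete Morrey norm over symmetric index sets `S_{m,N} = {m-N, …, m+N}`. -/
noncomputable def dnorm (p q : ℝ) (x : ℤ → ℝ) : ℝ≥0∞ :=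
  ⨆ (m : ℤ) (N : ℕ), ((2 * N + 1 : ℝ≥0∞) ^ (1 / q - 1 / p)) *
    ENNReal.ofReal ((∑ j ∈ Finset.Icc (m - N) (m + N), |x j| ^ p) ^ (1 / p))

/-- Discrete Morrey norm over arbitrary index intervals `S*_{k,n} = {k, …, k+n}`. -/
noncomputable def dnormStar (p q : ℝ) (x : ℤ → ℝ) : ℝ≥0∞ :=
  ⨆ (k : ℤ) (n : ℕ), ((n + 1 : ℝ≥0∞) ^ (1 / q - 1 / p)) *
    ENNReal.ofReal ((∑ j ∈ Finset.Icc k (k + n), |x j| ^ p) ^ (1 / p))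

/-- Morrey norm on the real line. -/
noncomputable def mnormR (p q : ℝ) (f : ℝ → ℝ) : ℝ≥0∞ :=
  ⨆ (a : ℝ) (r : Set.Ioi (0 : ℝ)),
    ENNReal.ofReal ((2 * r.1) ^ (1 / q - 1 / p) *
      (∫ t in (a - r.1)..(a + r.1), |f t| ^ p) ^ (1 / p))

/-- The step function `x̃(t) = ∑_j x_j χ_{[j,j+1)}(t)`, i.e. `x̃(t) = x ⌊t⌋`. -/
noncomputable def step (x : ℤ → ℝ) : ℝ → ℝ := fun t => x ⌊t⌋

/-- The set `S_n = {1 + 2^v + ⋯ + 2^{(n-1)v} + j·2^{nw} : j = 1, …, 2^{n(v-w)}}`. -/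
def Sn (v w n : ℕ) : Set ℤ :=
  {m | ∃ j : ℕ, 1 ≤ j ∧ j ≤ 2 ^ (n * (v - w)) ∧
    m = ((∑ i ∈ Finset.range n, 2 ^ (i * v) : ℕ) : ℤ) + (j : ℤ) * 2 ^ (n * w)}

/-- The sequence with `x_j = 1` iff `j ∈ {0,1} ∪ ⋃_{n≥1} S_n`, `x_j = 0` otherwise. -/
noncomputable def xseq (v w : ℕ) : ℤ → ℝ :=
  Set.indicator (({0, 1} : Set ℤ) ∪ ⋃ n ∈ Set.Ici 1, Sn v w n) 1

/-- `β_n = 1 + 2^v + ⋯ + 2^{nv}`. -/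
def beta (v n : ℕ) : ℕ := ∑ i ∈ Finset.range (n + 1), 2 ^ (i * v)

/-
Hölder's inequality with exponent `p₂ / p₁` on a finite set of `n` indices gives
`‖a‖_{p₁} ≤ n ^ (1/p₁ - 1/p₂) ‖a‖_{p₂}`. On a block of length `n = 2N + 1` the Morrey weight
`n ^ (1/q - 1/p₁)` of the `p₁`-term therefore absorbs this factor and becomes the weight
`n ^ (1/q - 1/p₂)` of the `p₂`-term, block by block.
-/

open Finset

namespace Real

theorem Lp_le_card_rpow_mul_Lp {ι : Type*} {p₁ p₂ : ℝ} (hp₁ : 0 < p₁) (h12 : p₁ ≤ p₂)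
    (s : Finset ι) (a : ι → ℝ) (ha : ∀ i, 0 ≤ a i) :
    (∑ i ∈ s, a i ^ p₁) ^ (1 / p₁) ≤
      (#s : ℝ) ^ (1 / p₁ - 1 / p₂) * (∑ i ∈ s, a i ^ p₂) ^ (1 / p₂) := by
  have hp₂ : 0 < p₂ := hp₁.trans_le h12
  have hpow : ∀ i, (a i ^ p₁) ^ (p₂ / p₁) = a i ^ p₂ := fun i => by
    rw [← rpow_mul (ha i), mul_div_cancel₀ _ hp₁.ne']
  have holder : ∑ i ∈ s, a i ^ p₁ ≤
      (#s : ℝ) ^ (1 - (p₂ / p₁)⁻¹) * (∑ i ∈ s, a i ^ p₂) ^ (p₂ / p₁)⁻¹ := by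
    simpa only [one_mul, sum_const, nsmul_eq_mul, mul_one, hpow] using
      inner_le_weight_mul_Lp_of_nonneg s ((one_le_div hp₁).mpr h12) (fun _ => 1)
        (fun i => a i ^ p₁) (fun _ => zero_le_one) (fun i => rpow_nonneg (ha i) _)
  have hsum : 0 ≤ ∑ i ∈ s, a i ^ p₂ := sum_nonneg fun i _ => rpow_nonneg (ha i) _
  calc (∑ i ∈ s, a i ^ p₁) ^ (1 / p₁)
      ≤ ((#s : ℝ) ^ (1 - (p₂ / p₁)⁻¹) * (∑ i ∈ s, a i ^ p₂) ^ (p₂ / p₁)⁻¹) ^ (1 / p₁) := by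
        gcongr
        exact sum_nonneg fun i _ => rpow_nonneg (ha i) _
    _ = (#s : ℝ) ^ (1 / p₁ - 1 / p₂) * (∑ i ∈ s, a i ^ p₂) ^ (1 / p₂) := by
        rw [mul_rpow (by positivity) (by positivity), ← rpow_mul (Nat.cast_nonneg _),
          ← rpow_mul hsum]
        congr 2 <;> field_simp

end Real

theorem card_rpow_mul_ofReal_Lp_le {ι : Type*} (q : ℝ) {p₁ p₂ : ℝ} (hp₁ : 0 < p₁)
    (h12 : p₁ ≤ p₂) (s : Finset ι) (hs : s.Nonempty) (a : ι → ℝ) (ha : ∀ i, 0 ≤ a i) :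
    (#s : ℝ≥0∞) ^ (1 / q - 1 / p₁) * ENNReal.ofReal ((∑ i ∈ s, a i ^ p₁) ^ (1 / p₁)) ≤
      (#s : ℝ≥0∞) ^ (1 / q - 1 / p₂) * ENNReal.ofReal ((∑ i ∈ s, a i ^ p₂) ^ (1 / p₂)) := by
  have hcard : (#s : ℝ≥0∞) ≠ 0 := by simpa using hs.ne_empty
  have hexp : 0 ≤ 1 / p₁ - 1 / p₂ := sub_nonneg.mpr (one_div_le_one_div_of_le hp₁ h12)
  calc (#s : ℝ≥0∞) ^ (1 / q - 1 / p₁) * ENNReal.ofReal ((∑ i ∈ s, a i ^ p₁) ^ (1 / p₁))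
      ≤ (#s : ℝ≥0∞) ^ (1 / q - 1 / p₁) * ENNReal.ofReal
          ((#s : ℝ) ^ (1 / p₁ - 1 / p₂) * (∑ i ∈ s, a i ^ p₂) ^ (1 / p₂)) := by
        gcongr
        exact Real.Lp_le_card_rpow_mul_Lp hp₁ h12 s a ha
    _ = (#s : ℝ≥0∞) ^ (1 / q - 1 / p₂) * ENNReal.ofReal ((∑ i ∈ s, a i ^ p₂) ^ (1 / p₂)) := by
        rw [ENNReal.ofReal_mul (by positivity),
          ← ENNReal.ofReal_rpow_of_nonneg (by positivity) hexp, ENNReal.ofReal_natCast,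
          ← mul_assoc, ← ENNReal.rpow_add _ _ hcard (by simp)]
        ring_nf

theorem stmt1_general (p₁ p₂ q : ℝ) (hp₁ : 1 ≤ p₁) (h12 : p₁ ≤ p₂) :
    ∀ x : ℤ → ℝ, dnorm p₁ q x ≤ dnorm p₂ q x := by
  intro x
  refine iSup₂_mono fun m N => ?_
  have hcard : (#(Icc (m - N) (m + N)) : ℝ≥0∞) = 2 * N + 1 := by
    rw [Int.card_Icc, show m + N + 1 - (m - N) = ((2 * N + 1 : ℕ) : ℤ) by push_cast; ring,
      Int.toNat_natCast]
    push_cast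
    ring
  rw [← hcard]
  exact card_rpow_mul_ofReal_Lp_le q (by positivity) h12 _ (nonempty_Icc.mpr (by omega))
    (fun j => |x j|) fun j => abs_nonneg _

theorem stmt1 (p₁ p₂ q : ℝ) (hp₁ : 1 ≤ p₁) (h12 : p₁ ≤ p₂) (h2q : p₂ ≤ q) :
    ∀ x : ℤ → ℝ, dnorm p₁ q x ≤ dnorm p₂ q x :=
  stmt1_general p₁ p₂ q hp₁ h12
end

section
/- Let 1 ≤ p ≤ q < ∞. For any sequence x = (x_j)_{j∈ℤ}, the norms ‖x‖_{ℓ^p_q} (over symmetric index sets of odd cardinality) and ‖x‖*_{ℓ^p_q} (over arbitrary index intervals) satisfy ‖x‖_{ℓ^p_q} ≤ ‖x‖*_{ℓ^p_q} ≤ (3/2)^{1/p−1/q} ‖x‖_{ℓ^p_q}. -/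
/-!
A symmetric window `{m-N, …, m+N}` is the interval `{m-N, …, m-N+2N}`, which gives the first
inequality. Conversely, an interval of `n+1` points is a symmetric window if `n` is even and lies in
one of `n+2` points if `n` is odd; as `n+2 ≤ 3/2 (n+1)` for `n ≥ 1` (with equality for a pair inside a
triple) and the weight `t ^ (1/q - 1/p)` is decreasing, enlarging the interval costs at most the
factor `(3/2) ^ (1/p - 1/q)`.
-/

open scoped ENNReal BigOperators

open Finset

theorem ENNReal.rpow_le_rpow_of_nonpos {x y : ℝ≥0∞} {z : ℝ} (hxy : x ≤ y) (hz : z ≤ 0) :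
    y ^ z ≤ x ^ z := by
  rw [← neg_neg z, ENNReal.rpow_neg y (-z), ENNReal.rpow_neg x (-z)]
  exact ENNReal.inv_le_inv.2 (ENNReal.rpow_le_rpow hxy (neg_nonneg.2 hz))

theorem ENNReal.rpow_le_rpow_neg_mul_rpow_of_le_mul {a b c : ℝ≥0∞} {r : ℝ} (hr : r ≤ 0)
    (ha : a ≠ 0) (hc : c ≠ 0) (hc' : c ≠ ⊤) (hb : b ≤ c * a) :
    a ^ r ≤ c ^ (-r) * b ^ r := by
  have hcr : c ^ (-r) * c ^ r = 1 := by
    rw [← ENNReal.rpow_add _ _ hc hc', neg_add_cancel, ENNReal.rpow_zero]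
  calc a ^ r = c ^ (-r) * (c * a) ^ r := by
        rw [ENNReal.mul_rpow_of_ne_zero hc ha, ← mul_assoc, hcr, one_mul]
    _ ≤ c ^ (-r) * b ^ r := mul_le_mul_right (ENNReal.rpow_le_rpow_of_nonpos hb hr) _

theorem ofReal_sum_abs_rpow_rpow_le_of_subset {ι : Type*} {p : ℝ} (hp : 0 ≤ p) (f : ι → ℝ)
    {s t : Finset ι} (hst : s ⊆ t) :
    ENNReal.ofReal ((∑ j ∈ s, |f j| ^ p) ^ (1 / p)) ≤
      ENNReal.ofReal ((∑ j ∈ t, |f j| ^ p) ^ (1 / p)) := by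
  gcongr

theorem exists_Icc_subset_Icc_symm (k : ℤ) (n : ℕ) :
    ∃ (m : ℤ) (N : ℕ), Icc k (k + n) ⊆ Icc (m - N) (m + N) ∧ 2 * (2 * N + 1) ≤ 3 * (n + 1) :=
  ⟨k + (n / 2 : ℕ), (n + 1) / 2, Icc_subset_Icc (by omega) (by omega), by omega⟩

section

variable (p q : ℝ) (x : ℤ → ℝ)

theorem le_dnorm (m : ℤ) (N : ℕ) :
    (2 * N + 1 : ℝ≥0∞) ^ (1 / q - 1 / p) *
      ENNReal.ofReal ((∑ j ∈ Icc (m - N) (m + N), |x j| ^ p) ^ (1 / p)) ≤ dnorm p q x :=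
  le_iSup₂ (f := fun (m : ℤ) (N : ℕ) => (2 * N + 1 : ℝ≥0∞) ^ (1 / q - 1 / p) *
    ENNReal.ofReal ((∑ j ∈ Icc (m - N) (m + N), |x j| ^ p) ^ (1 / p))) m N

theorem le_dnormStar (k : ℤ) (n : ℕ) :
    (n + 1 : ℝ≥0∞) ^ (1 / q - 1 / p) *
      ENNReal.ofReal ((∑ j ∈ Icc k (k + n), |x j| ^ p) ^ (1 / p)) ≤ dnormStar p q x :=
  le_iSup₂ (f := fun (k : ℤ) (n : ℕ) => (n + 1 : ℝ≥0∞) ^ (1 / q - 1 / p) *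
    ENNReal.ofReal ((∑ j ∈ Icc k (k + n), |x j| ^ p) ^ (1 / p))) k n

theorem dnorm_le_dnormStar : dnorm p q x ≤ dnormStar p q x := by
  refine iSup₂_le fun m N => ?_
  have hend : m - N + (2 * N : ℕ) = m + N := by push_cast; ring
  have hlen : ((2 * N : ℕ) + 1 : ℝ≥0∞) = 2 * N + 1 := by push_cast; rfl
  simpa only [hend, hlen] using le_dnormStar p q x (m - N) (2 * N)

end

theorem dnormStar_le {p q : ℝ} (hp : 0 ≤ p) (hpq : 1 / q ≤ 1 / p) (x : ℤ → ℝ) :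
    dnormStar p q x ≤ (3 / 2 : ℝ≥0∞) ^ (1 / p - 1 / q) * dnorm p q x := by
  refine iSup₂_le fun k n => ?_
  obtain ⟨m, N, hsub, hlen⟩ := exists_Icc_subset_Icc_symm k n
  have hlen' : (2 * N + 1 : ℝ≥0∞) ≤ 3 / 2 * (n + 1) := by
    rw [← ENNReal.mul_div_right_comm, ENNReal.le_div_iff_mul_le (by simp) (by simp), mul_comm]
    exact_mod_cast hlen
  have hcoef := ENNReal.rpow_le_rpow_neg_mul_rpow_of_le_mul (sub_nonpos.2 hpq)
    (by simp) (by simp) (ENNReal.div_ne_top (by simp) (by simp)) hlen'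
  rw [neg_sub] at hcoef
  calc _ ≤ (3 / 2 : ℝ≥0∞) ^ (1 / p - 1 / q) * (2 * N + 1 : ℝ≥0∞) ^ (1 / q - 1 / p) *
        ENNReal.ofReal ((∑ j ∈ Icc (m - N) (m + N), |x j| ^ p) ^ (1 / p)) :=
        mul_le_mul' hcoef (ofReal_sum_abs_rpow_rpow_le_of_subset hp x hsub)
    _ ≤ _ := by rw [mul_assoc]; exact mul_le_mul_right (le_dnorm p q x m N) _

theorem stmt3 (p q : ℝ) (hp : 1 ≤ p) (hpq : p ≤ q) (x : ℤ → ℝ) :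
    dnorm p q x ≤ dnormStar p q x ∧
      dnormStar p q x ≤ ENNReal.ofReal ((3 / 2 : ℝ) ^ (1 / p - 1 / q)) * dnorm p q x := by
  have hp0 : 0 < p := by linarith
  have hC : ENNReal.ofReal ((3 / 2 : ℝ) ^ (1 / p - 1 / q)) = (3 / 2 : ℝ≥0∞) ^ (1 / p - 1 / q) := by
    rw [← ENNReal.ofReal_rpow_of_pos (by norm_num)]
    simp [ENNReal.ofReal_div_of_pos]
  rw [hC]
  exact ⟨dnorm_le_dnormStar p q x,
    dnormStar_le hp0.le (one_div_le_one_div_of_le hp0 hpq) x⟩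
end

section
/- For 1 ≤ p ≤ q < ∞ and any sequence x = (x_j)_{j∈ℤ} with finite discrete Morrey norm ‖x‖*_{ℓ^p_q}, the step function x̃(t) := Σ_{j∈ℤ} x_j χ_{[j,j+1)}(t) satisfies ‖x‖*_{ℓ^p_q} ≤ ‖x̃‖_{M^p_q(ℝ)} ≤ 2^{1/p−1/q} ‖x‖*_{ℓ^p_q}. -/
open scoped ENNReal BigOperators

/-!
For the lower bound, the integral of `|x̃|^p` over `[k, k + n + 1]` is exactly the sum of
`|x_j|^p` over `j = k, …, k + n`.

For the upper bound put `A = 1 - p/q ∈ [0, 1]`, so that `‖x‖* ≤ M` says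
`∑_{j=k}^{k+n} |x_j|^p ≤ (n + 1)^A M^p`. An interval of length `s` meets `n + 1 < s + 2` unit
cells, hence carries at most `(n + 1)^A M^p ≤ (2s)^A M^p` as soon as `n + 1 ≤ 2s`; when `s ≤ 1`
the bound `s M^p ≤ s^A M^p` suffices. The one remaining configuration, `1 < s < 2` meeting three
cells, is settled by pairing each partial outer cell with the middle one and using concavity of
`t ↦ t^A` between `1` and `2`. Taking `p`-th roots and dividing by `s^{1/p - 1/q}` leaves
the constant `2^{A/p} = 2^{1/p - 1/q}`.
-/

open MeasureTheory intervalIntegral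

section FloorIntegral

variable {E : Type*} [NormedAddCommGroup E]

theorem intervalIntegrable_comp_floor (g : ℤ → E) (a b : ℝ) :
    IntervalIntegrable (fun t => g ⌊t⌋) volume a b := by
  refine IntegrableOn.intervalIntegrable ?_
  have hmeas : AEStronglyMeasurable (fun t : ℝ => g ⌊t⌋) volume :=
    (StronglyMeasurable.of_discrete.comp_measurable Int.measurable_floor).aestronglyMeasurable
  refine Measure.integrableOn_of_bounded measure_Icc_lt_top.ne hmeas
    (M := ∑ j ∈ Finset.Icc ⌊min a b⌋ ⌊max a b⌋, ‖g j‖) ?_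
  refine (ae_restrict_iff' measurableSet_Icc).2 (Filter.Eventually.of_forall fun t ht => ?_)
  exact Finset.single_le_sum (f := fun j => ‖g j‖) (fun _ _ => norm_nonneg _)
    (Finset.mem_Icc.2 ⟨Int.floor_mono ht.1, Int.floor_mono ht.2⟩)

variable [NormedSpace ℝ E] [CompleteSpace E]

theorem integral_comp_floor_of_le_of_le (g : ℤ → E) {j : ℤ} {u v : ℝ} (hu : (j : ℝ) ≤ u)
    (huv : u ≤ v) (hv : v ≤ j + 1) : ∫ t in u..v, g ⌊t⌋ = (v - u) • g j := by
  have hconst : Set.EqOn (fun t => g ⌊t⌋) (fun _ => g j) (Set.Ioo u v) := fun t ht =>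
    congrArg g (Int.floor_eq_iff.2 ⟨hu.trans ht.1.le, ht.2.trans_le hv⟩)
  rw [integral_of_le huv, integral_Ioc_eq_integral_Ioo,
    setIntegral_congr_fun measurableSet_Ioo hconst]
  simp [Measure.real, Real.volume_Ioo, huv]

theorem integral_comp_floor_intCast (g : ℤ → E) {k m : ℤ} (hkm : k ≤ m) :
    ∫ t in (k : ℝ)..(m : ℝ), g ⌊t⌋ = ∑ j ∈ Finset.Ico k m, g j := by
  induction m, hkm using Int.leInduction with
  | base => simp
  | succ m hkm ih =>
    rw [← integral_add_adjacent_intervals (intervalIntegrable_comp_floor g _ (m : ℝ))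
      (intervalIntegrable_comp_floor g _ _), ih,
      integral_comp_floor_of_le_of_le g le_rfl (by push_cast; linarith) (by push_cast; rfl),
      ← Finset.insert_Ico_right_eq_Ico_add_one hkm, Finset.sum_insert (by simp)]
    push_cast
    simp [add_comm]

theorem integral_comp_floor (g : ℤ → E) {u v : ℝ} (huv : u ≤ v) :
    ∫ t in u..v, g ⌊t⌋ =
      ∑ j ∈ Finset.Ico ⌊u⌋ ⌊v⌋, g j - Int.fract u • g ⌊u⌋ + Int.fract v • g ⌊v⌋ := by
  have hint := intervalIntegrable_comp_floor g
  rw [← integral_interval_sub_left (hint (⌊u⌋ : ℝ) v) (hint _ u),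
    ← integral_add_adjacent_intervals (hint _ (⌊v⌋ : ℝ)) (hint _ v),
    integral_comp_floor_intCast g (Int.floor_mono huv),
    integral_comp_floor_of_le_of_le g le_rfl (Int.floor_le u) (Int.lt_floor_add_one u).le,
    integral_comp_floor_of_le_of_le g le_rfl (Int.floor_le v) (Int.lt_floor_add_one v).le,
    Int.fract, Int.fract]
  abel

end FloorIntegral

theorem sub_add_mul_two_rpow_le_rpow {A s : ℝ} (hA₀ : 0 ≤ A) (hA₁ : A ≤ 1) (hs₁ : 1 ≤ s)
    (hs₂ : s ≤ 2) : (2 - s) + (s - 1) * 2 ^ A ≤ s ^ A := by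
  have h := (Real.concaveOn_rpow hA₀ hA₁).2 (Set.mem_Ici.2 zero_le_one)
    (Set.mem_Ici.2 zero_le_two) (by linarith : 0 ≤ 2 - s) (by linarith : 0 ≤ s - 1) (by ring)
  simp only [smul_eq_mul, Real.one_rpow, mul_one] at h
  rwa [show 2 - s + (s - 1) * 2 = s by ring] at h

section FloorIntegralBound

variable {g : ℤ → ℝ} {A P : ℝ} {u v : ℝ}

theorem integral_comp_floor_le_mul (hgP : ∀ j, g j ≤ P) (huv : u ≤ v) :
    ∫ t in u..v, g ⌊t⌋ ≤ (v - u) * P := by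
  calc ∫ t in u..v, g ⌊t⌋ ≤ ∫ _ in u..v, P :=
        integral_mono_on huv (intervalIntegrable_comp_floor g u v) intervalIntegrable_const
          fun t _ => hgP ⌊t⌋
    _ = (v - u) * P := by rw [intervalIntegral.integral_const, smul_eq_mul]

theorem integral_comp_floor_le_sum_Icc (hg : ∀ j, 0 ≤ g j) (huv : u ≤ v) :
    ∫ t in u..v, g ⌊t⌋ ≤ ∑ j ∈ Finset.Icc ⌊u⌋ ⌊v⌋, g j := by
  have hu : 0 ≤ Int.fract u * g ⌊u⌋ := mul_nonneg (Int.fract_nonneg u) (hg _)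
  have hv : Int.fract v * g ⌊v⌋ ≤ g ⌊v⌋ :=
    mul_le_of_le_one_left (hg _) (Int.fract_lt_one v).le
  rw [integral_comp_floor g huv, ← Finset.Ico_insert_right (Int.floor_mono huv),
    Finset.sum_insert Finset.right_notMem_Ico, smul_eq_mul, smul_eq_mul]
  linarith

theorem integral_comp_floor_le_of_floor_eq_add_two (hg : ∀ j, 0 ≤ g j) (hA₀ : 0 ≤ A)
    (hA₁ : A ≤ 1)
    (hsum : ∀ (k : ℤ) (n : ℕ), ∑ j ∈ Finset.Icc k (k + n), g j ≤ ((n : ℝ) + 1) ^ A * P)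
    (hfloor : ⌊v⌋ = ⌊u⌋ + 2) (hs : v - u ≤ 2) :
    ∫ t in u..v, g ⌊t⌋ ≤ (v - u) ^ A * P := by
  have huv : u ≤ v := by
    have := congrArg ((↑) : ℤ → ℝ) hfloor
    push_cast at this
    linarith [Int.lt_floor_add_one u, Int.floor_le v]
  rw [integral_comp_floor g huv, hfloor]
  set k := ⌊u⌋
  have hpair (i : ℤ) : g i + g (i + 1) ≤ 2 ^ A * P := by
    have h := hsum i 1
    rwa [Nat.cast_one, Nat.cast_one, Int.Icc_eq_pair, Finset.sum_pair (by omega),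
      one_add_one_eq_two] at h
  have hP : g (k + 1) ≤ P := by simpa using hsum (k + 1) 0
  have hlen : v - u = 2 + Int.fract v - Int.fract u := by
    rw [Int.fract, Int.fract, hfloor]; push_cast; ring
  have hsum_Ico : ∑ j ∈ Finset.Ico k (k + 2), g j = g k + g (k + 1) := by
    rw [show k + 2 = k + 1 + 1 by ring, Finset.Ico_add_one_right_eq_Icc, Int.Icc_eq_pair,
      Finset.sum_pair (by omega)]
  have hw₀ : 0 ≤ 1 - Int.fract u := by linarith [Int.fract_lt_one u]
  have hw₂ : 0 ≤ Int.fract v := Int.fract_nonneg v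
  have hconc := sub_add_mul_two_rpow_le_rpow hA₀ hA₁
    (by linarith [Int.fract_lt_one u] : 1 ≤ v - u) hs
  -- the integral is `w₀ (g k + g (k+1)) + w₂ (g (k+1) + g (k+2)) + (2 - (v - u)) g (k+1)`
  have h₀ := mul_le_mul_of_nonneg_left (hpair k) hw₀
  have h₂ := mul_le_mul_of_nonneg_left (hpair (k + 1)) hw₂
  have h₁ := mul_le_mul_of_nonneg_left hP (by linarith : 0 ≤ 2 - (v - u))
  have hconcP := mul_le_mul_of_nonneg_right hconc ((hg k).trans (by simpa using hsum k 0))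
  rw [hsum_Ico, smul_eq_mul, smul_eq_mul, show k + 2 = k + 1 + 1 by ring]
  rw [hlen] at h₁ hconcP ⊢
  linarith

theorem integral_comp_floor_le_of_sum_le (hg : ∀ j, 0 ≤ g j) (hA₀ : 0 ≤ A) (hA₁ : A ≤ 1)
    (hsum : ∀ (k : ℤ) (n : ℕ), ∑ j ∈ Finset.Icc k (k + n), g j ≤ ((n : ℝ) + 1) ^ A * P)
    (huv : u < v) : ∫ t in u..v, g ⌊t⌋ ≤ (2 * (v - u)) ^ A * P := by
  have hP : 0 ≤ P := (hg 0).trans (by simpa using hsum 0 0)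
  have hs : 0 < v - u := sub_pos.2 huv
  have hdouble : (v - u) ^ A * P ≤ (2 * (v - u)) ^ A * P :=
    mul_le_mul_of_nonneg_right (Real.rpow_le_rpow hs.le (by linarith) hA₀) hP
  obtain ⟨n, hn⟩ := Int.le.dest (Int.floor_mono huv.le)
  have hn_lt : (n : ℝ) < v - u + 1 := by
    have := congrArg (fun z : ℤ => (z : ℝ)) hn
    push_cast at this
    linarith [Int.floor_le v, Int.lt_floor_add_one u]
  rcases le_or_gt (v - u) 1 with hs₁ | hs₁
  · calc ∫ t in u..v, g ⌊t⌋ ≤ (v - u) * P :=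
          integral_comp_floor_le_mul (fun j => by simpa using hsum j 0) huv.le
      _ ≤ (v - u) ^ A * P :=
          mul_le_mul_of_nonneg_right (Real.self_le_rpow_of_le_one hs.le hs₁ hA₁) hP
      _ ≤ (2 * (v - u)) ^ A * P := hdouble
  rcases le_or_gt ((n : ℝ) + 1) (2 * (v - u)) with hn₂ | hn₂
  · calc ∫ t in u..v, g ⌊t⌋ ≤ ∑ j ∈ Finset.Icc ⌊u⌋ ⌊v⌋, g j :=
          integral_comp_floor_le_sum_Icc hg huv.le
      _ ≤ ((n : ℝ) + 1) ^ A * P := hn ▸ hsum ⌊u⌋ n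
      _ ≤ (2 * (v - u)) ^ A * P :=
          mul_le_mul_of_nonneg_right (Real.rpow_le_rpow (by positivity) hn₂ hA₀) hP
  have hn_eq : n = 2 := by
    have h₁ : (1 : ℝ) < n := by linarith
    have h₂ : (n : ℝ) < 3 := by linarith
    norm_cast at h₁ h₂
    omega
  subst hn_eq
  exact (integral_comp_floor_le_of_floor_eq_add_two hg hA₀ hA₁ hsum (by omega)
    (by linarith)).trans hdouble

end FloorIntegralBound

theorem natCast_add_one_rpow_mul_ofReal (n : ℕ) (e y : ℝ) :
    ((n + 1 : ℝ≥0∞) ^ e) * ENNReal.ofReal y = ENNReal.ofReal (((n : ℝ) + 1) ^ e * y) := by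
  rw [ENNReal.ofReal_mul (by positivity), ← ENNReal.ofReal_rpow_of_pos (by positivity)]
  norm_cast

theorem dnormStar_le_mnormR_step (p q : ℝ) (x : ℤ → ℝ) :
    dnormStar p q x ≤ mnormR p q (step x) := by
  refine iSup₂_le fun k n => ?_
  have hr : ((n : ℝ) + 1) / 2 ∈ Set.Ioi (0 : ℝ) := Set.mem_Ioi.2 (by positivity)
  refine le_trans (le_of_eq ?_) (le_iSup₂ (f := fun (a : ℝ) (r : Set.Ioi (0 : ℝ)) =>
    ENNReal.ofReal ((2 * r.1) ^ (1 / q - 1 / p) *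
      (∫ t in (a - r.1)..(a + r.1), |step x t| ^ p) ^ (1 / p))) (k + ((n : ℝ) + 1) / 2) ⟨_, hr⟩)
  have hint := integral_comp_floor_intCast (fun j => |x j| ^ p) (show k ≤ k + n + 1 by omega)
  push_cast at hint
  rw [natCast_add_one_rpow_mul_ofReal, ← Finset.Ico_add_one_right_eq_Icc, ← hint]
  simp only [step]
  rw [show (k : ℝ) + ((n : ℝ) + 1) / 2 - ((n : ℝ) + 1) / 2 = k by ring,
    show (k : ℝ) + ((n : ℝ) + 1) / 2 + ((n : ℝ) + 1) / 2 = k + n + 1 by ring,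
    show 2 * (((n : ℝ) + 1) / 2) = n + 1 by ring]

theorem rpow_neg_mul_rpow_one_div_le_iff {c S M θ p : ℝ} (hc : 0 < c) (hS : 0 ≤ S) (hM : 0 ≤ M)
    (hp : 0 < p) : c ^ (-θ) * S ^ (1 / p) ≤ M ↔ S ≤ c ^ (θ * p) * M ^ p := by
  rw [Real.rpow_neg hc.le, inv_mul_le_iff₀ (by positivity), one_div,
    Real.rpow_inv_le_iff_of_pos hS (by positivity) hp, Real.mul_rpow (by positivity) hM,
    ← Real.rpow_mul hc.le]

theorem sum_rpow_le_of_dnormStar_le_ofReal {p q M : ℝ} {x : ℤ → ℝ} (hp : 0 < p) (hM : 0 ≤ M)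
    (h : dnormStar p q x ≤ ENNReal.ofReal M) (k : ℤ) (n : ℕ) :
    ∑ j ∈ Finset.Icc k (k + n), |x j| ^ p ≤ ((n : ℝ) + 1) ^ ((1 / p - 1 / q) * p) * M ^ p := by
  have hterm := (le_iSup₂ (f := fun (k : ℤ) (n : ℕ) => ((n + 1 : ℝ≥0∞) ^ (1 / q - 1 / p)) *
    ENNReal.ofReal ((∑ j ∈ Finset.Icc k (k + n), |x j| ^ p) ^ (1 / p))) k n).trans h
  rw [natCast_add_one_rpow_mul_ofReal, ENNReal.ofReal_le_ofReal_iff hM, ← neg_sub] at hterm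
  exact (rpow_neg_mul_rpow_one_div_le_iff (by positivity)
    (Finset.sum_nonneg fun j _ => by positivity) hM hp).1 hterm

theorem mnormR_step_le_ofReal {p q M : ℝ} {x : ℤ → ℝ} (hp : 0 < p) (hpq : p ≤ q) (hM : 0 ≤ M)
    (h : dnormStar p q x ≤ ENNReal.ofReal M) :
    mnormR p q (step x) ≤ ENNReal.ofReal (2 ^ (1 / p - 1 / q) * M) := by
  set θ := 1 / p - 1 / q
  have hA₀ : 0 ≤ θ * p := mul_nonneg (sub_nonneg.2 (one_div_le_one_div_of_le hp hpq)) hp.le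
  have hA₁ : θ * p ≤ 1 := by
    have : 0 ≤ p / q := div_nonneg hp.le (hp.trans_le hpq).le
    have : θ * p = 1 - p / q := by simp only [θ]; field_simp
    linarith
  refine iSup₂_le fun a ⟨r, hr⟩ => ENNReal.ofReal_le_ofReal ?_
  have hr : 0 < r := hr
  have hcore := integral_comp_floor_le_of_sum_le (fun j => by positivity) hA₀ hA₁
    (sum_rpow_le_of_dnormStar_le_ofReal hp hM h) (by linarith : a - r < a + r)
  rw [← neg_sub, rpow_neg_mul_rpow_one_div_le_iff (by positivity)
    (integral_nonneg (by linarith) fun t _ => by positivity) (by positivity) hp]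
  calc ∫ t in (a - r)..(a + r), |step x t| ^ p
      ≤ (2 * (a + r - (a - r))) ^ (θ * p) * M ^ p := hcore
    _ = (2 * r) ^ (θ * p) * (2 ^ θ * M) ^ p := by
      rw [show 2 * (a + r - (a - r)) = 2 * (2 * r) by ring, Real.mul_rpow (by norm_num)
        (by positivity), Real.mul_rpow (by positivity) hM, ← Real.rpow_mul zero_le_two]
      ring

theorem mnormR_step_le {p q : ℝ} (hp : 0 < p) (hpq : p ≤ q) (x : ℤ → ℝ) :
    mnormR p q (step x) ≤ ENNReal.ofReal (2 ^ (1 / p - 1 / q)) * dnormStar p q x := by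
  rcases eq_or_ne (dnormStar p q x) ⊤ with htop | htop
  · rw [htop, ENNReal.mul_top (by positivity)]
    exact le_top
  · rw [← ENNReal.ofReal_toReal htop, ← ENNReal.ofReal_mul (by positivity)]
    exact mnormR_step_le_ofReal hp hpq ENNReal.toReal_nonneg (ENNReal.ofReal_toReal htop).ge

theorem stmt4_general (p q : ℝ) (hp : 1 ≤ p) (hpq : p ≤ q) (x : ℤ → ℝ) :
    dnormStar p q x ≤ mnormR p q (step x) ∧
      mnormR p q (step x) ≤ ENNReal.ofReal ((2 : ℝ) ^ (1 / p - 1 / q)) * dnormStar p q x :=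
  ⟨dnormStar_le_mnormR_step p q x, mnormR_step_le (by linarith) hpq x⟩

theorem stmt4 (p q : ℝ) (hp : 1 ≤ p) (hpq : p ≤ q) (x : ℤ → ℝ)
    (hx : dnormStar p q x ≠ ⊤) :
    dnormStar p q x ≤ mnormR p q (step x) ∧
      mnormR p q (step x) ≤ ENNReal.ofReal ((2 : ℝ) ^ (1 / p - 1 / q)) * dnormStar p q x :=
  stmt4_general p q hp hpq x
end

section
/- Let 1 ≤ p₁ < p₂ < q < ∞ and v, w ∈ ℕ with q/p₂ < v/w < q/p₁. Define x_j = 1 if j ∈ {0,1} ∪ ⋃_{n≥1} S_n and x_j = 0 otherwise, where S_n = {1 + 2^v + ⋯ + 2^{(n−1)v} + j·2^{nw} : j = 1, …, 2^{n(v−w)}}. Then x ∈ ℓ^{p₁}_q but x ∉ ℓ^{p₂}_q. -/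
open scoped ENNReal BigOperators

/-!
The support of `xseq v w` is `{0}` together with the blocks `S_m` (`S_0 = {1}`); `S_m` is an
arithmetic progression of `2^{m(v-w)}` points with step `2^{mw}` inside `(β_{m-1}, β_m]`, an
interval of length `2^{mv}`. Let `θ = 1 - w/v`. A window of `n + 1` consecutive integers meets a
single block in at most `min(2^{m(v-w)}, (n+1)/2^{mw} + 1) ≤ 2(n+1)^θ` points. If it meets `S_a`
and `S_{b+1}` with `a < b`, it contains the whole block `(β_{b-1}, β_b]`, so `2^{bv} < n`, and all
blocks below the top two it meets carry together at most `∑_{m<b} 2^{m(v-w)} ≤ 2^{b(v-w)} ≤ n^θ`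
points. Hence every window contains `O((n+1)^θ)` points of the support, and `θ ≤ 1 - p₁/q` makes
the `ℓ^{p₁}_q` norm finite. Conversely the window spanning `S_m` has at most `2^{mv}` points and
contains `2^{m(v-w)}` points of the support, which gives a term `2^{m(v/q - w/p₂)}` of the
`ℓ^{p₂}_q` norm, unbounded since `v/q > w/p₂`.
-/

open Finset
open scoped ENNReal

theorem sum_range_le_of_gap {c : ℕ → ℕ} {r : ℕ} {D E : ℝ} (hr : 2 ≤ r)
    (hcr : ∀ m, c m ≤ r ^ m) (hcD : ∀ m, (c m : ℝ) ≤ D) (hE : 0 ≤ E)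
    (hgap : ∀ a b, a < b → c a ≠ 0 → c (b + 1) ≠ 0 → (r ^ b : ℝ) ≤ E) (N : ℕ) :
    ∑ m ∈ range N, (c m : ℝ) ≤ E + 2 * D := by
  have hlow : ∀ b, c (b + 1) ≠ 0 → ∑ m ∈ range b, (c m : ℝ) ≤ E := by
    intro b hb
    by_cases hzero : ∃ a < b, c a ≠ 0
    swap
    · push Not at hzero
      rwa [sum_eq_zero fun a ha => by simp [hzero a (mem_range.1 ha)]]
    obtain ⟨a, hab, ha⟩ := hzero
    calc ∑ m ∈ range b, (c m : ℝ) ≤ ∑ m ∈ range b, (r ^ m : ℝ) := by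
          gcongr with m; exact_mod_cast hcr m
      _ ≤ r ^ b := by exact_mod_cast (Nat.geomSum_lt hr fun k hk => mem_range.1 hk).le
      _ ≤ E := hgap a b hab ha hb
  induction N with
  | zero => simp only [range_zero, sum_empty]; linarith [(Nat.cast_nonneg _).trans (hcD 0)]
  | succ N ih =>
    rw [sum_range_succ]
    rcases eq_or_ne (c N) 0 with h | h
    · simpa [h] using ih
    cases N with
    | zero => simp only [range_zero, sum_empty]; linarith [hcD 0]
    | succ b => rw [sum_range_succ]; linarith [hlow b h, hcD b, hcD (b + 1)]

theorem card_filter_modEq_Ico_le {a b c d : ℤ} (hd : 0 < d) (hab : a ≤ b) :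
    (#{x ∈ Ico a b | x ≡ c [ZMOD d]} : ℝ) ≤ (b - a) / d + 1 := by
  have hceil : (#{x ∈ Ico a b | x ≡ c [ZMOD d]} : ℤ) ≤ ⌈((b - a : ℤ) : ℚ) / d⌉ := by
    rw [Int.Ico_filter_modEq_card a b hd c]
    refine max_le ?_ <| Int.ceil_nonneg <|
      div_nonneg (by exact_mod_cast sub_nonneg.2 hab) (by positivity)
    have : ((b : ℚ) - c) / d = ((a : ℚ) - c) / d + ((b - a : ℤ) : ℚ) / d := by
      push_cast; ring
    rw [this]
    linarith [Int.ceil_add_le (((a : ℚ) - c) / d) (((b - a : ℤ) : ℚ) / d)]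
  have hq : (#{x ∈ Ico a b | x ≡ c [ZMOD d]} : ℚ) ≤ ((b - a : ℤ) : ℚ) / d + 1 :=
    (Int.cast_le.2 hceil).trans (Int.ceil_lt_add_one _).le
  exact_mod_cast hq

theorem sum_abs_indicator_one_rpow {α : Type*} (S : Set α) [DecidablePred (· ∈ S)]
    (s : Finset α) {p : ℝ} (hp : p ≠ 0) :
    ∑ j ∈ s, |S.indicator (1 : α → ℝ) j| ^ p = #{j ∈ s | j ∈ S} := by
  rw [card_filter, Nat.cast_sum]
  refine sum_congr rfl fun j _ => ?_
  by_cases h : j ∈ S <;> simp [h, Real.zero_rpow hp]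

theorem dnormStar_eq_iSup_ofReal (p q : ℝ) (x : ℤ → ℝ) :
    dnormStar p q x = ⨆ (k : ℤ) (n : ℕ), ENNReal.ofReal
      (((n : ℝ) + 1) ^ (1 / q - 1 / p) * (∑ j ∈ Icc k (k + n), |x j| ^ p) ^ (1 / p)) := by
  unfold dnormStar
  congr! with k n
  rw [ENNReal.ofReal_mul (by positivity),
    ← ENNReal.ofReal_rpow_of_pos (x := (n : ℝ) + 1) (by positivity)]
  norm_cast

theorem dnormStar_ne_top_of_sum_le {p q C : ℝ} {x : ℤ → ℝ} (hp : 0 < p) (hC : 0 ≤ C)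
    (h : ∀ (k : ℤ) (n : ℕ), ∑ j ∈ Icc k (k + n), |x j| ^ p ≤ C * ((n : ℝ) + 1) ^ (1 - p / q)) :
    dnormStar p q x ≠ ⊤ := by
  rw [dnormStar_eq_iSup_ofReal]
  refine ne_top_of_le_ne_top (ENNReal.ofReal_ne_top (r := C ^ (1 / p)))
    (iSup₂_le fun k n => ENNReal.ofReal_le_ofReal ?_)
  have ht : (0 : ℝ) < n + 1 := by positivity
  calc ((n : ℝ) + 1) ^ (1 / q - 1 / p) * (∑ j ∈ Icc k (k + n), |x j| ^ p) ^ (1 / p)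
      ≤ ((n : ℝ) + 1) ^ (1 / q - 1 / p) * (C * ((n : ℝ) + 1) ^ (1 - p / q)) ^ (1 / p) := by
        gcongr
        exact h k n
    _ = C ^ (1 / p) * ((n : ℝ) + 1) ^ (1 / q - 1 / p + (1 - p / q) * (1 / p)) := by
        rw [Real.mul_rpow hC (by positivity), ← Real.rpow_mul ht.le, Real.rpow_add ht]; ring
    _ = C ^ (1 / p) := by
        rw [show 1 / q - 1 / p + (1 - p / q) * (1 / p) = 0 by field_simp; ring,
          Real.rpow_zero, mul_one]

theorem dnormStar_eq_top_of_unbounded {p q : ℝ} {x : ℤ → ℝ}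
    (h : ∀ M : ℝ, ∃ (k : ℤ) (n : ℕ),
      M ≤ ((n : ℝ) + 1) ^ (1 / q - 1 / p) * (∑ j ∈ Icc k (k + n), |x j| ^ p) ^ (1 / p)) :
    dnormStar p q x = ⊤ := by
  refine ENNReal.eq_top_of_forall_nnreal_le fun M => ?_
  obtain ⟨k, n, hM⟩ := h M
  rw [dnormStar_eq_iSup_ofReal, ← ENNReal.ofReal_coe_nnreal]
  exact (ENNReal.ofReal_le_ofReal hM).trans (le_iSup₂_of_le k n le_rfl)

def blockStart (v m : ℕ) : ℤ := ((∑ i ∈ range m, 2 ^ (i * v) : ℕ) : ℤ)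

def block (v w m : ℕ) : Finset ℤ :=
  (Icc 1 (2 ^ (m * (v - w)))).image fun j : ℕ => blockStart v m + j * 2 ^ (m * w)

def xsupport (v w : ℕ) : Set ℤ := ({0, 1} : Set ℤ) ∪ ⋃ n ∈ Set.Ici 1, Sn v w n

section Blocks

variable {v w : ℕ}

theorem blockStart_succ (v m : ℕ) : blockStart v (m + 1) = blockStart v m + 2 ^ (m * v) := by
  simp [blockStart, sum_range_succ]

theorem blockStart_mono (v : ℕ) : Monotone (blockStart v) := fun a b hab => by
  unfold blockStart
  exact_mod_cast sum_le_sum_of_subset (range_subset_range.2 hab)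

theorem le_blockStart (v m : ℕ) : (m : ℤ) ≤ blockStart v m := by
  unfold blockStart
  have := card_nsmul_le_sum (range m) (fun i => 2 ^ (i * v)) 1 fun i _ => Nat.one_le_two_pow
  simp only [card_range, smul_eq_mul, mul_one] at this
  exact_mod_cast this

theorem coe_block (v w m : ℕ) : (block v w m : Set ℤ) = Sn v w m := by
  ext z
  simp [block, Sn, blockStart, eq_comm, and_assoc]

theorem block_zero (v w : ℕ) : block v w 0 = {1} := by
  simp [block, blockStart]

theorem card_block (v w m : ℕ) : #(block v w m) = 2 ^ (m * (v - w)) := by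
  rw [block, card_image_of_injective _ fun i j hij => by simpa using hij, Nat.card_Icc,
    Nat.add_sub_cancel]

theorem block_subset_Icc (hwv : w ≤ v) (m : ℕ) :
    block v w m ⊆ Icc (blockStart v m + 2 ^ (m * w)) (blockStart v m + 2 ^ (m * v)) := by
  simp only [block, image_subset_iff, mem_Icc]
  rintro j ⟨hj1, hj2⟩
  have hpow : (2 : ℤ) ^ (m * (v - w)) * 2 ^ (m * w) = 2 ^ (m * v) := by
    rw [← pow_add, ← Nat.mul_add, Nat.sub_add_cancel hwv]
  constructor
  · nlinarith [(by exact_mod_cast hj1 : (1 : ℤ) ≤ j), pow_pos (two_pos : (0 : ℤ) < 2) (m * w)]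
  · nlinarith [(by exact_mod_cast hj2 : (j : ℤ) ≤ 2 ^ (m * (v - w))),
      pow_pos (two_pos : (0 : ℤ) < 2) (m * w)]

theorem modEq_of_mem_block {m : ℕ} {z : ℤ} (hz : z ∈ block v w m) :
    z ≡ blockStart v m [ZMOD 2 ^ (m * w)] := by
  obtain ⟨j, -, rfl⟩ := mem_image.1 hz
  simp [Int.ModEq]

theorem pow_lt_sub_of_mem_block (hwv : w ≤ v) {a b : ℕ} (hab : a < b) {z z' : ℤ}
    (hz : z ∈ block v w a) (hz' : z' ∈ block v w (b + 1)) : 2 ^ (b * v) < z' - z := by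
  have h₁ := mem_Icc.1 (block_subset_Icc hwv a hz)
  have h₂ := mem_Icc.1 (block_subset_Icc hwv (b + 1) hz')
  have h₃ := blockStart_mono v (Nat.succ_le_of_lt hab)
  rw [blockStart_succ] at h₂ h₃
  linarith [pow_pos (two_pos : (0 : ℤ) < 2) ((b + 1) * w)]

theorem mem_xsupport {z : ℤ} : z ∈ xsupport v w ↔ z = 0 ∨ ∃ m, z ∈ block v w m := by
  simp only [xsupport, ← coe_block, Set.mem_union, Set.mem_insert_iff, Set.mem_singleton_iff,
    Set.mem_iUnion, Set.mem_Ici, mem_coe, exists_prop]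
  constructor
  · rintro ((rfl | rfl) | ⟨m, -, hz⟩)
    exacts [Or.inl rfl, Or.inr ⟨0, by simp [block_zero]⟩, Or.inr ⟨m, hz⟩]
  · rintro (rfl | ⟨_ | m, hz⟩)
    exacts [Or.inl (Or.inl rfl), Or.inl (Or.inr (by simpa [block_zero] using hz)),
      Or.inr ⟨m + 1, m.succ_pos, hz⟩]

end Blocks

section Counting

variable {v w : ℕ}

theorem two_pow_mul_rpow_div (hv : v ≠ 0) (m u : ℕ) :
    ((2 : ℝ) ^ (m * v)) ^ ((u : ℝ) / v) = 2 ^ (m * u) := by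
  rw [← Real.rpow_natCast, ← Real.rpow_mul zero_le_two, ← Real.rpow_natCast]
  congr 1
  push_cast
  field_simp

theorem one_sub_div_nonneg (hwv : w < v) : 0 ≤ 1 - (w : ℝ) / v :=
  sub_nonneg.2 (div_le_one_of_le₀ (by exact_mod_cast hwv.le) v.cast_nonneg)

theorem two_pow_mul_rpow_one_sub_div (hwv : w < v) (m : ℕ) :
    ((2 : ℝ) ^ (m * v)) ^ (1 - (w : ℝ) / v) = 2 ^ (m * (v - w)) := by
  have hv : (v : ℝ) ≠ 0 := by exact_mod_cast (Nat.zero_lt_of_lt hwv).ne'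
  rw [show 1 - (w : ℝ) / v = ((v - w : ℕ) : ℝ) / v by push_cast [Nat.cast_sub hwv.le]; field_simp,
    two_pow_mul_rpow_div (by exact_mod_cast hv)]

theorem card_Icc_inter_block_le (hwv : w < v) (k : ℤ) (n m : ℕ) :
    (#(Icc k (k + n) ∩ block v w m) : ℝ) ≤ 2 * ((n : ℝ) + 1) ^ (1 - (w : ℝ) / v) := by
  have hone : 1 ≤ ((n : ℝ) + 1) ^ (1 - (w : ℝ) / v) :=
    Real.one_le_rpow (by linarith [n.cast_nonneg (α := ℝ)]) (one_sub_div_nonneg hwv)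
  rcases le_or_gt ((2 : ℝ) ^ (m * v)) (n + 1) with hsmall | hlarge
  · calc (#(Icc k (k + n) ∩ block v w m) : ℝ) ≤ #(block v w m) := by
          exact_mod_cast card_le_card inter_subset_right
      _ = ((2 : ℝ) ^ (m * v)) ^ (1 - (w : ℝ) / v) := by
          rw [card_block, two_pow_mul_rpow_one_sub_div hwv]; norm_cast
      _ ≤ ((n : ℝ) + 1) ^ (1 - (w : ℝ) / v) := by gcongr; exact one_sub_div_nonneg hwv
      _ ≤ 2 * ((n : ℝ) + 1) ^ (1 - (w : ℝ) / v) := by linarith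
  · have hsub : Icc k (k + n) ∩ block v w m ⊆
        {x ∈ Ico k (k + n + 1) | x ≡ blockStart v m [ZMOD 2 ^ (m * w)]} := fun z hz => by
      obtain ⟨hzI, hz⟩ := mem_inter.1 hz
      exact mem_filter.2 ⟨by simp only [mem_Icc, mem_Ico] at hzI ⊢; omega,
        modEq_of_mem_block hz⟩
    have hpow : ((n : ℝ) + 1) ^ ((w : ℝ) / v) ≤ 2 ^ (m * w) := by
      rw [← two_pow_mul_rpow_div (v := v) (by omega) m w]; gcongr
    calc (#(Icc k (k + n) ∩ block v w m) : ℝ)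
        ≤ #{x ∈ Ico k (k + n + 1) | x ≡ blockStart v m [ZMOD 2 ^ (m * w)]} := by
          exact_mod_cast card_le_card hsub
      _ ≤ ((k + n + 1 : ℤ) - k : ℝ) / (2 ^ (m * w) : ℤ) + 1 :=
          card_filter_modEq_Ico_le (by positivity) (by omega)
      _ = ((n : ℝ) + 1) / 2 ^ (m * w) + 1 := by push_cast; ring
      _ ≤ ((n : ℝ) + 1) / ((n : ℝ) + 1) ^ ((w : ℝ) / v) + 1 := by gcongr
      _ = ((n : ℝ) + 1) ^ (1 - (w : ℝ) / v) + 1 := by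
          rw [Real.rpow_sub (by positivity), Real.rpow_one]
      _ ≤ 2 * ((n : ℝ) + 1) ^ (1 - (w : ℝ) / v) := by linarith

theorem card_Icc_filter_xsupport_le [DecidablePred (· ∈ xsupport v w)] (hwv : w < v) (k : ℤ)
    (n : ℕ) :
    (#{z ∈ Icc k (k + n) | z ∈ xsupport v w} : ℝ) ≤ 6 * ((n : ℝ) + 1) ^ (1 - (w : ℝ) / v) := by
  set I := Icc k (k + n)
  set t := ((n : ℝ) + 1) ^ (1 - (w : ℝ) / v)
  have ht : 1 ≤ t :=
    Real.one_le_rpow (by linarith [n.cast_nonneg (α := ℝ)]) (one_sub_div_nonneg hwv)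
  have hsub : {z ∈ I | z ∈ xsupport v w} ⊆
      {0} ∪ (range (k + n).toNat).biUnion fun m => I ∩ block v w m := by
    intro z hz
    obtain ⟨hzI, hz⟩ := mem_filter.1 hz
    rcases mem_xsupport.1 hz with rfl | ⟨m, hm⟩
    · exact mem_union_left _ (mem_singleton_self 0)
    refine mem_union_right _ (mem_biUnion.2 ⟨m, ?_, mem_inter.2 ⟨hzI, hm⟩⟩)
    have hstart := (mem_Icc.1 (block_subset_Icc hwv.le m hm)).1
    have hm_le := le_blockStart v m
    have hz_le := (mem_Icc.1 hzI).2
    have hstep := pow_pos (two_pos : (0 : ℤ) < 2) (m * w)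
    rw [mem_range]
    omega
  have hgap : ∀ a b, a < b → #(I ∩ block v w a) ≠ 0 → #(I ∩ block v w (b + 1)) ≠ 0 →
      ((2 ^ (v - w) : ℕ) ^ b : ℝ) ≤ t := by
    intro a b hab ha hb
    obtain ⟨z, hz⟩ := card_ne_zero.1 ha
    obtain ⟨z', hz'⟩ := card_ne_zero.1 hb
    have hlt := pow_lt_sub_of_mem_block hwv.le hab (mem_inter.1 hz).2 (mem_inter.1 hz').2
    have hz := mem_Icc.1 (mem_inter.1 hz).1
    have hz' := mem_Icc.1 (mem_inter.1 hz').1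
    have hbv : ((2 : ℝ) ^ (b * v)) ≤ n + 1 := by
      have : (2 : ℤ) ^ (b * v) ≤ n + 1 := by linarith
      exact_mod_cast this
    calc ((2 ^ (v - w) : ℕ) ^ b : ℝ) = ((2 : ℝ) ^ (b * v)) ^ (1 - (w : ℝ) / v) := by
          rw [two_pow_mul_rpow_one_sub_div hwv, mul_comm b, pow_mul]; norm_cast
      _ ≤ t := Real.rpow_le_rpow (by positivity) hbv (one_sub_div_nonneg hwv)
  have hblocks := sum_range_le_of_gap (c := fun m => #(I ∩ block v w m))
    (Nat.le_self_pow (by omega) 2)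
    (fun m => by
      rw [← pow_mul, mul_comm, ← card_block v w m]; exact card_le_card inter_subset_right)
    (card_Icc_inter_block_le hwv k n) (by positivity) hgap (k + n).toNat
  calc (#{z ∈ I | z ∈ xsupport v w} : ℝ)
      ≤ #({0} ∪ (range (k + n).toNat).biUnion fun m => I ∩ block v w m) := by
        exact_mod_cast card_le_card hsub
    _ ≤ 1 + ∑ m ∈ range (k + n).toNat, (#(I ∩ block v w m) : ℝ) := by
        exact_mod_cast (card_union_le _ _).trans (add_le_add (card_singleton 0).le card_biUnion_le)
    _ ≤ 6 * t := by linarith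

theorem exists_Icc_card_filter_xsupport_ge [DecidablePred (· ∈ xsupport v w)] (hwv : w ≤ v)
    (m : ℕ) :
    ∃ (k : ℤ) (n : ℕ), (n : ℝ) + 1 ≤ 2 ^ (m * v) ∧
      (2 ^ (m * (v - w)) : ℝ) ≤ #{z ∈ Icc k (k + n) | z ∈ xsupport v w} := by
  have hpow : 2 ^ (m * w) ≤ 2 ^ (m * v) := Nat.pow_le_pow_right two_pos (Nat.mul_le_mul_left m hwv)
  have hone : 1 ≤ 2 ^ (m * w) := Nat.one_le_two_pow
  refine ⟨blockStart v m + 2 ^ (m * w), 2 ^ (m * v) - 2 ^ (m * w), ?_, ?_⟩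
  · exact_mod_cast (by omega : 2 ^ (m * v) - 2 ^ (m * w) + 1 ≤ 2 ^ (m * v))
  · have hcard : #(block v w m) ≤ #{z ∈ Icc (blockStart v m + 2 ^ (m * w))
        (blockStart v m + 2 ^ (m * w) + (2 ^ (m * v) - 2 ^ (m * w) : ℕ)) | z ∈ xsupport v w} := by
      refine card_le_card fun z hz => mem_filter.2 ⟨?_, mem_xsupport.2 (Or.inr ⟨m, hz⟩)⟩
      rw [Nat.cast_sub hpow]
      push_cast
      rw [add_add_sub_cancel]
      exact block_subset_Icc hwv m hz
    rw [card_block] at hcard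
    exact_mod_cast hcard

end Counting

theorem two_pow_rpow_mul_two_pow_rpow {v w : ℕ} (hwv : w ≤ v) (p q : ℝ) (m : ℕ) :
    ((2 : ℝ) ^ (m * v)) ^ (1 / q - 1 / p) * ((2 : ℝ) ^ (m * (v - w))) ^ (1 / p) =
      ((2 : ℝ) ^ ((v : ℝ) / q - w / p)) ^ m := by
  simp only [← Real.rpow_natCast, ← Real.rpow_mul zero_le_two, ← Real.rpow_add two_pos]
  congr 1
  push_cast [Nat.cast_sub hwv]
  ring

theorem stmt7 (p₁ p₂ q : ℝ) (hp₁ : 1 ≤ p₁) (h12 : p₁ < p₂) (h2q : p₂ < q)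
    (v w : ℕ) (hw : 0 < w)
    (h₁ : q / p₂ < (v : ℝ) / w) (h₂ : (v : ℝ) / w < q / p₁) :
    dnormStar p₁ q (xseq v w) ≠ ⊤ ∧ dnormStar p₂ q (xseq v w) = ⊤ := by
  classical
  have hp₁0 : 0 < p₁ := by linarith
  have hp₂0 : 0 < p₂ := by linarith
  have hq0 : 0 < q := by linarith
  have hw0 : (0 : ℝ) < w := by exact_mod_cast hw
  have hwv : w < v := by
    have : (1 : ℝ) < v / w := ((one_lt_div hp₂0).2 h2q).trans h₁
    exact_mod_cast (one_lt_div hw0).1 this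
  have hv0 : (0 : ℝ) < v := by exact_mod_cast hw.trans hwv
  have hsum (p : ℝ) (hp : 0 < p) (k : ℤ) (n : ℕ) :
      ∑ j ∈ Icc k (k + n), |xseq v w j| ^ p = #{z ∈ Icc k (k + n) | z ∈ xsupport v w} :=
    sum_abs_indicator_one_rpow (xsupport v w) _ hp.ne'
  constructor
  · have hθ : 1 - (w : ℝ) / v ≤ 1 - p₁ / q := by
      rw [div_lt_div_iff₀ hw0 hp₁0] at h₂
      rw [sub_le_sub_iff_left, div_le_div_iff₀ hq0 hv0]
      linarith
    refine dnormStar_ne_top_of_sum_le hp₁0 (C := 6) (by norm_num) fun k n => ?_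
    rw [hsum p₁ hp₁0]
    calc _ ≤ 6 * ((n : ℝ) + 1) ^ (1 - (w : ℝ) / v) := card_Icc_filter_xsupport_le hwv k n
      _ ≤ 6 * ((n : ℝ) + 1) ^ (1 - p₁ / q) := by
        gcongr
        linarith [n.cast_nonneg (α := ℝ)]
  · have ha : 1 < (2 : ℝ) ^ ((v : ℝ) / q - w / p₂) := by
      rw [div_lt_div_iff₀ hp₂0 hw0] at h₁
      refine Real.one_lt_rpow one_lt_two (sub_pos.2 ?_)
      rw [div_lt_div_iff₀ hp₂0 hq0]
      linarith
    refine dnormStar_eq_top_of_unbounded fun M => ?_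
    obtain ⟨m, hm⟩ := pow_unbounded_of_one_lt M ha
    obtain ⟨k, n, hn, hcard⟩ := exists_Icc_card_filter_xsupport_ge hwv.le m
    refine ⟨k, n, hm.le.trans ?_⟩
    rw [hsum p₂ hp₂0, ← two_pow_rpow_mul_two_pow_rpow hwv.le]
    have hexp : 1 / q - 1 / p₂ ≤ 0 := sub_nonpos.2 (one_div_le_one_div_of_le hp₂0 h2q.le)
    exact mul_le_mul (Real.rpow_le_rpow_of_nonpos (by positivity) hn hexp)
      (Real.rpow_le_rpow (by positivity) hcard (by positivity)) (by positivity) (by positivity)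
end

section
/- Let 1 ≤ p_j ≤ q_j < ∞ for j = 1, 2. If the inclusion ℓ^{p₂}_{q₂} ⊆ ℓ^{p₁}_{q₁} holds, then p₁/q₁ ≤ p₂/q₂. -/
open scoped ENNReal BigOperators

namespace Stmt12Aux

open Finset

def blkF (a b R n : ℕ) : Finset ℤ :=
  (Finset.range (2 ^ (n * a))).image (fun j : ℕ => (2 ^ (R * n * b) : ℤ) + (j : ℤ) * 2 ^ (n * (b - a)))

def Aset (a b R : ℕ) : Set ℤ := {z | ∃ n, 1 ≤ n ∧ z ∈ blkF a b R n}

open Classical in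
noncomputable def myx (a b R : ℕ) : ℤ → ℝ := fun z => if z ∈ Aset a b R then 1 else 0

lemma mem_blkF {a b R n : ℕ} {z : ℤ} :
    z ∈ blkF a b R n ↔ ∃ j : ℕ, j < 2 ^ (n * a) ∧ z = (2 ^ (R * n * b) : ℤ) + (j : ℤ) * 2 ^ (n * (b - a)) := by
  constructor
  · intro h
    obtain ⟨j, hj, rfl⟩ := Finset.mem_image.mp h
    exact ⟨j, Finset.mem_range.mp hj, rfl⟩
  · rintro ⟨j, hj, rfl⟩
    exact Finset.mem_image.mpr ⟨j, Finset.mem_range.mpr hj, rfl⟩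

lemma blkF_lb {a b R n : ℕ} {z : ℤ} (h : z ∈ blkF a b R n) : (2 ^ (R * n * b) : ℤ) ≤ z := by
  obtain ⟨j, _, rfl⟩ := mem_blkF.mp h
  have h1 : (0:ℤ) ≤ (j : ℤ) * 2 ^ (n * (b - a)) :=
    mul_nonneg (Int.natCast_nonneg j) (by positivity)
  linarith

lemma blkF_ub {a b R n : ℕ} (hab : a ≤ b) {z : ℤ} (h : z ∈ blkF a b R n) :
    z ≤ (2 ^ (R * n * b) : ℤ) + 2 ^ (n * b) - 2 ^ (n * (b - a)) := by
  obtain ⟨j, hj, rfl⟩ := mem_blkF.mp h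
  have hj' : (j : ℤ) ≤ 2 ^ (n * a) - 1 := by
    have : (j : ℤ) < 2 ^ (n * a) := by exact_mod_cast hj
    omega
  have hg : (0:ℤ) < 2 ^ (n * (b - a)) := by positivity
  have hmul : (j : ℤ) * 2 ^ (n * (b - a)) ≤ (2 ^ (n * a) - 1) * 2 ^ (n * (b - a)) :=
    mul_le_mul_of_nonneg_right hj' hg.le
  have hKg : (2 ^ (n * a) : ℤ) * 2 ^ (n * (b - a)) = 2 ^ (n * b) := by
    rw [← pow_add]
    congr 1
    have h2 : a + (b - a) = b := Nat.add_sub_cancel' hab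
    rw [← Nat.mul_add, h2]
  nlinarith [hmul, hKg]

lemma blkF_card_le (a b R n : ℕ) : (blkF a b R n).card ≤ 2 ^ (n * a) :=
  le_trans Finset.card_image_le (by simp)

lemma blkF_card (a b R n : ℕ) : (blkF a b R n).card = 2 ^ (n * a) := by
  rw [blkF, Finset.card_image_of_injective _ ?_, Finset.card_range]
  intro j₁ j₂ h
  have hg : (2 ^ (n * (b - a)) : ℤ) ≠ 0 := by positivity
  simp only at h
  have h3 := mul_right_cancel₀ hg
    (by linarith : (j₁ : ℤ) * 2 ^ (n * (b - a)) = (j₂ : ℤ) * 2 ^ (n * (b - a)))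
  exact_mod_cast h3



open Finset

section
variable (a b R : ℕ)

open Classical in
/-- count of a single block in an interval -/
lemma blk_interval_card (m : ℕ) (k : ℤ) (n : ℕ) :
    ((Finset.Icc k (k + n)).filter (· ∈ blkF a b R m)).card
      ≤ min (2 ^ (m * a)) (n / 2 ^ (m * (b - a)) + 1) := by
  classical
  have hg : 0 < 2 ^ (m * (b - a)) := Nat.pow_pos (by norm_num)
  set J : Finset ℕ := (Finset.range (2 ^ (m * a))).filter
    (fun j => k ≤ (2 ^ (R * m * b) : ℤ) + (j : ℤ) * 2 ^ (m * (b - a)) ∧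
      (2 ^ (R * m * b) : ℤ) + (j : ℤ) * 2 ^ (m * (b - a)) ≤ k + n) with hJ
  have hsub : ((Finset.Icc k (k + n)).filter (· ∈ blkF a b R m)) ⊆
      J.image (fun j : ℕ => (2 ^ (R * m * b) : ℤ) + (j : ℤ) * 2 ^ (m * (b - a))) := by
    intro z hz
    rw [Finset.mem_filter, Finset.mem_Icc] at hz
    obtain ⟨⟨hz1, hz2⟩, hmem⟩ := hz
    obtain ⟨j, hj, rfl⟩ := mem_blkF.mp hmem
    exact Finset.mem_image.mpr ⟨j,
      Finset.mem_filter.mpr ⟨Finset.mem_range.mpr hj, hz1, hz2⟩, rfl⟩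
  have hcard1 : ((Finset.Icc k (k + n)).filter (· ∈ blkF a b R m)).card ≤ J.card :=
    le_trans (Finset.card_le_card hsub) Finset.card_image_le
  refine le_trans hcard1 (le_min ?_ ?_)
  · exact le_trans (Finset.card_le_card (Finset.filter_subset _ _)) (by simp)
  · rcases J.eq_empty_or_nonempty with hJe | hJne
    · simp [hJe]
    · have hj₀J : J.min' hJne ∈ J := J.min'_mem hJne
      have hsubJ : J ⊆ Finset.Icc (J.min' hJne) (J.min' hJne + n / 2 ^ (m * (b - a))) := by
        intro j hjJ
        rw [Finset.mem_Icc]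
        have hle : J.min' hJne ≤ j := J.min'_le j hjJ
        refine ⟨hle, ?_⟩
        obtain ⟨-, -, hj2⟩ := Finset.mem_filter.mp hjJ
        obtain ⟨-, hj01, -⟩ := Finset.mem_filter.mp hj₀J
        have hd : ((j - J.min' hJne : ℕ) : ℤ) * 2 ^ (m * (b - a)) ≤ n := by
          push_cast [Nat.cast_sub hle]
          nlinarith
        have hd' : (j - J.min' hJne) * 2 ^ (m * (b - a)) ≤ n := by exact_mod_cast hd
        have h5 := (Nat.le_div_iff_mul_le hg).mpr hd'
        omega
      calc J.card ≤ (Finset.Icc (J.min' hJne) (J.min' hJne + n / 2 ^ (m * (b - a)))).card :=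
            Finset.card_le_card hsubJ
        _ = n / 2 ^ (m * (b - a)) + 1 := by rw [Nat.card_Icc]; generalize n / 2 ^ (m * (b - a)) = d; omega

lemma sum_pow_le (ha : 1 ≤ a) (m : ℕ) : ∑ i ∈ Finset.range (m + 1), 2 ^ (i * a) ≤ 2 ^ (a * m + 1) := by
  induction m with
  | zero => simp
  | succ m ih =>
    rw [Finset.sum_range_succ]
    have h1 : 2 ^ (a * m + 1) ≤ 2 ^ ((m + 1) * a) := by
      apply Nat.pow_le_pow_right (by norm_num)
      nlinarith
    have h2 : (m + 1) * a + 1 ≤ a * (m + 1) + 1 := by ring_nf; omega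
    calc ∑ i ∈ Finset.range (m + 1), 2 ^ (i * a) + 2 ^ ((m + 1) * a)
        ≤ 2 ^ (a * m + 1) + 2 ^ ((m + 1) * a) := by omega
      _ ≤ 2 ^ ((m + 1) * a) + 2 ^ ((m + 1) * a) := by omega
      _ = 2 ^ ((m + 1) * a + 1) := by ring
      _ ≤ 2 ^ (a * (m + 1) + 1) := Nat.pow_le_pow_right (by norm_num) (by nlinarith)

open Classical in
/-- multi-block total bound -/
lemma total_card_le (m : ℕ) (ha : 1 ≤ a) (k : ℤ) (n : ℕ)
    (hm : ∀ i, m < i → (k + n : ℤ) < 2 ^ (R * i * b)) :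
    ((Finset.Icc k (k + n)).filter (· ∈ Aset a b R)).card ≤ 2 ^ (a * m + 1) := by
  classical
  have hsub : ((Finset.Icc k (k + n)).filter (· ∈ Aset a b R)) ⊆
      (Finset.range (m + 1)).biUnion (fun i => (Finset.Icc k (k + n)).filter (· ∈ blkF a b R i)) := by
    intro z hz
    rw [Finset.mem_filter] at hz
    obtain ⟨hzI, i, hi1, hzi⟩ := hz
    have him : i ≤ m := by
      by_contra hgt
      push_neg at hgt
      have h1 := hm i hgt
      have h2 := blkF_lb hzi
      have h3 : z ≤ k + n := (Finset.mem_Icc.mp hzI).2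
      omega
    exact Finset.mem_biUnion.mpr ⟨i, Finset.mem_range.mpr (by omega),
      Finset.mem_filter.mpr ⟨hzI, hzi⟩⟩
  calc ((Finset.Icc k (k + n)).filter (· ∈ Aset a b R)).card
      ≤ _ := Finset.card_le_card hsub
    _ ≤ ∑ i ∈ Finset.range (m + 1), ((Finset.Icc k (k + n)).filter (· ∈ blkF a b R i)).card :=
        Finset.card_biUnion_le
    _ ≤ ∑ i ∈ Finset.range (m + 1), 2 ^ (i * a) := by
        apply Finset.sum_le_sum
        intro i _
        calc ((Finset.Icc k (k + n)).filter (· ∈ blkF a b R i)).card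
            ≤ (blkF a b R i).card := Finset.card_le_card (fun x hx => (Finset.mem_filter.mp hx).2)
          _ ≤ 2 ^ (i * a) := blkF_card_le a b R i
    _ ≤ 2 ^ (a * m + 1) := sum_pow_le a ha m

end


section
variable (a b R : ℕ)

lemma pow2_cast (s : ℕ) : ((2 ^ s : ℕ) : ℝ) = (2 : ℝ) ^ (s : ℝ) := by
  push_cast
  rw [Real.rpow_natCast]

lemma mono2 {s t : ℝ} (h : s ≤ t) : (2 : ℝ) ^ s ≤ (2 : ℝ) ^ t :=
  Real.rpow_le_rpow_of_exponent_le one_le_two h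

set_option maxHeartbeats 2000000 in
open Classical in
lemma count_le (ha : 0 < a) (hab : a < b) (hR : 1 ≤ R) (θ : ℝ)
    (hθ0 : 0 ≤ θ) (hθ1 : θ ≤ 1) (hE1 : (a : ℝ) ≤ (b : ℝ) * θ)
    (hE3 : ∀ m : ℕ, 1 ≤ m → ((a : ℝ) * m + 1) ≤ ((R * m * b - 1 : ℕ) : ℝ) * θ)
    (k : ℤ) (n : ℕ) :
    ((((Finset.Icc k (k + n)).filter (· ∈ Aset a b R)).card : ℝ))
      ≤ 2 * ((n : ℝ) + 1) ^ θ := by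
  classical
  have hb2 : 2 ≤ b := by omega
  have hL1 : (1 : ℝ) ≤ (n : ℝ) + 1 := by
    have := Nat.cast_nonneg (α := ℝ) n; linarith
  have hL0 : (0 : ℝ) < (n : ℝ) + 1 := by positivity
  have hLθ : (1 : ℝ) ≤ ((n : ℝ) + 1) ^ θ := Real.one_le_rpow hL1 hθ0
  by_cases h0 : (k + n : ℤ) < 2 ^ (R * 1 * b)
  · -- interval below the first block
    have he : ((Finset.Icc k (k + n)).filter (· ∈ Aset a b R)) = ∅ := by
      rw [Finset.filter_eq_empty_iff]
      rintro z hz ⟨i, hi1, hzi⟩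
      have h1 := blkF_lb hzi
      have h2 : (2 ^ (R * 1 * b) : ℤ) ≤ 2 ^ (R * i * b) := by
        apply pow_le_pow_right₀ (by norm_num)
        exact Nat.mul_le_mul (Nat.mul_le_mul_left R hi1) le_rfl
      have h3 : z ≤ k + n := (Finset.mem_Icc.mp hz).2
      omega
    rw [he]
    simp only [Finset.card_empty, Nat.cast_zero]
    positivity
  push_neg at h0
  -- find the largest block index m with 2^(R*m*b) ≤ k+n
  set N : ℕ := (k + n).toNat with hN
  have hpw : (0 : ℤ) ≤ 2 ^ (R * 1 * b) := pow_nonneg (by norm_num) _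
  have hkn0 : (0 : ℤ) ≤ k + n := le_trans hpw h0
  have hNkn : (N : ℤ) = k + n := Int.toNat_of_nonneg hkn0
  set P : ℕ → Prop := fun i => (2 ^ (R * i * b) : ℤ) ≤ k + n with hP
  have hP1 : P 1 := h0
  have h1N : 1 ≤ N := by
    have : (2 : ℤ) ≤ 2 ^ (R * 1 * b) := by
      calc (2:ℤ) = 2 ^ 1 := (pow_one 2).symm
      _ ≤ 2 ^ (R * 1 * b) := pow_le_pow_right₀ (by norm_num)
          (by calc 1 = 1 * 1 * 1 := by ring
                _ ≤ R * 1 * b := Nat.mul_le_mul (Nat.mul_le_mul hR le_rfl) (by omega))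
    omega
  set m : ℕ := Nat.findGreatest P N with hmdef
  have hm1 : 1 ≤ m := Nat.le_findGreatest h1N hP1
  have hPm : P m := Nat.findGreatest_spec h1N hP1
  have hm' : ∀ i, m < i → (k + n : ℤ) < 2 ^ (R * i * b) := by
    intro i hi
    by_cases hiN : i ≤ N
    · exact lt_of_not_ge (Nat.findGreatest_is_greatest hi hiN)
    · push_neg at hiN
      have h2 : (i : ℤ) < 2 ^ i := by exact_mod_cast Nat.lt_two_pow_self (n := i)
      have h3 : (2 ^ i : ℤ) ≤ 2 ^ (R * i * b) :=
        pow_le_pow_right₀ (by norm_num)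
          (by calc i = 1 * i * 1 := by ring
                _ ≤ R * i * b := Nat.mul_le_mul (Nat.mul_le_mul hR le_rfl) (by omega))
      omega
  clear_value m N
  by_cases hA : m = 1 ∨ ((2 ^ (R * (m - 1) * b) : ℤ) + 2 ^ ((m - 1) * b) < k)
  · -- Case A : only block m intersects the interval
    have hsub : ((Finset.Icc k (k + n)).filter (· ∈ Aset a b R)) ⊆
        ((Finset.Icc k (k + n)).filter (· ∈ blkF a b R m)) := by
      intro z hz
      rw [Finset.mem_filter] at hz ⊢
      obtain ⟨hzI, i, hi1, hzi⟩ := hz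
      refine ⟨hzI, ?_⟩
      rcases lt_trichotomy i m with hlt | rfl | hgt
      · exfalso
        have hm2 : m ≠ 1 := by omega
        have hkz := hA.resolve_left hm2
        have h1 := blkF_ub hab.le hzi
        have h2 : (2 ^ (R * i * b) : ℤ) + 2 ^ (i * b) ≤
            2 ^ (R * (m - 1) * b) + 2 ^ ((m - 1) * b) := by
          have hi' : i ≤ m - 1 := by omega
          have e1 : (2 ^ (R * i * b) : ℤ) ≤ 2 ^ (R * (m - 1) * b) :=
            pow_le_pow_right₀ (by norm_num)
              (Nat.mul_le_mul (Nat.mul_le_mul le_rfl hi') le_rfl)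
          have e2 : (2 ^ (i * b) : ℤ) ≤ 2 ^ ((m - 1) * b) :=
            pow_le_pow_right₀ (by norm_num) (Nat.mul_le_mul hi' le_rfl)
          omega
        have h3 : k ≤ z := (Finset.mem_Icc.mp hzI).1
        have h4 : (0:ℤ) < 2 ^ (i * (b - a)) := by positivity
        omega
      · exact hzi
      · exfalso
        have h1 := hm' i hgt
        have h2 := blkF_lb hzi
        have h3 : z ≤ k + n := (Finset.mem_Icc.mp hzI).2
        omega
    have hcard := le_trans (Finset.card_le_card hsub) (blk_interval_card a b R m k n)
    by_cases hc1 : n < 2 ^ (m * (b - a))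
    · -- tiny interval
      have h8 : n / 2 ^ (m * (b - a)) = 0 := Nat.div_eq_of_lt hc1
      have h9 := le_trans hcard (min_le_right _ _)
      rw [h8] at h9
      have hcard1 : (((Finset.Icc k (k + n)).filter (· ∈ Aset a b R)).card : ℝ) ≤ 1 := by
        exact_mod_cast h9
      nlinarith
    push_neg at hc1
    by_cases hc2 : n + 1 ≤ 2 ^ (m * b)
    · -- medium interval
      have hcard1 : ((Finset.Icc k (k + n)).filter (· ∈ Aset a b R)).card
          ≤ 2 * (n / 2 ^ (m * (b - a))) := by
        have h1 : 1 ≤ n / 2 ^ (m * (b - a)) :=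
          Nat.one_le_div_iff (by positivity) |>.mpr hc1
        have := le_trans hcard (min_le_right _ _)
        omega
      have hg0 : (0:ℝ) < ((2 ^ (m * (b - a)) : ℕ) : ℝ) := by positivity
      have hstep1 : (((Finset.Icc k (k + n)).filter (· ∈ Aset a b R)).card : ℝ)
          ≤ 2 * ((n : ℝ) / ((2 ^ (m * (b - a)) : ℕ) : ℝ)) := by
        calc (((Finset.Icc k (k + n)).filter (· ∈ Aset a b R)).card : ℝ)
            ≤ ((2 * (n / 2 ^ (m * (b - a))) : ℕ) : ℝ) := by exact_mod_cast hcard1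
          _ = 2 * (((n / 2 ^ (m * (b - a)) : ℕ)) : ℝ) := by push_cast; ring
          _ ≤ 2 * ((n : ℝ) / ((2 ^ (m * (b - a)) : ℕ) : ℝ)) := by
              have := Nat.cast_div_le (α := ℝ) (m := n) (n := 2 ^ (m * (b - a)))
              nlinarith
      -- now  L^{1-θ} ≤ g
      have hgkey : ((n : ℝ) + 1) ^ (1 - θ) ≤ ((2 ^ (m * (b - a)) : ℕ) : ℝ) := by
        have hLM : ((n : ℝ) + 1) ≤ ((2 ^ (m * b) : ℕ) : ℝ) := by exact_mod_cast hc2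
        have e1 : ((n : ℝ) + 1) ^ (1 - θ) ≤ ((2 ^ (m * b) : ℕ) : ℝ) ^ (1 - θ) :=
          Real.rpow_le_rpow (by positivity) hLM (by linarith)
        have e2 : ((2 ^ (m * b) : ℕ) : ℝ) ^ (1 - θ) ≤ (2:ℝ) ^ ((m * (b - a) : ℕ) : ℝ) := by
          rw [pow2_cast, ← Real.rpow_mul (by norm_num)]
          apply mono2
          have hc : ((m * (b - a) : ℕ) : ℝ) = (m : ℝ) * ((b : ℝ) - (a : ℝ)) := by
            push_cast [Nat.cast_sub hab.le]
            ring
          rw [hc]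
          have hm0 : (0:ℝ) ≤ (m:ℝ) := by positivity
          push_cast
          nlinarith
        calc ((n : ℝ) + 1) ^ (1 - θ) ≤ ((2 ^ (m * b) : ℕ) : ℝ) ^ (1 - θ) := e1
          _ ≤ (2:ℝ) ^ ((m * (b - a) : ℕ) : ℝ) := e2
          _ = ((2 ^ (m * (b - a)) : ℕ) : ℝ) := (pow2_cast _).symm
      have hdiv : ((n : ℝ)) / ((2 ^ (m * (b - a)) : ℕ) : ℝ) ≤ ((n : ℝ) + 1) ^ θ := by
        rw [div_le_iff₀ hg0]
        have hsplit : ((n : ℝ) + 1) = ((n : ℝ) + 1) ^ (1 - θ) * ((n : ℝ) + 1) ^ θ := by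
          rw [← Real.rpow_add hL0]
          norm_num
        have h9 : (0:ℝ) ≤ ((n : ℝ) + 1) ^ θ := by positivity
        calc (n : ℝ) ≤ (n : ℝ) + 1 := by linarith
          _ = ((n : ℝ) + 1) ^ (1 - θ) * ((n : ℝ) + 1) ^ θ := hsplit
          _ ≤ ((2 ^ (m * (b - a)) : ℕ) : ℝ) * ((n : ℝ) + 1) ^ θ :=
              mul_le_mul_of_nonneg_right hgkey h9
          _ = ((n : ℝ) + 1) ^ θ * ((2 ^ (m * (b - a)) : ℕ) : ℝ) := by ring
      calc (((Finset.Icc k (k + n)).filter (· ∈ Aset a b R)).card : ℝ)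
          ≤ 2 * ((n : ℝ) / ((2 ^ (m * (b - a)) : ℕ) : ℝ)) := hstep1
        _ ≤ 2 * ((n : ℝ) + 1) ^ θ := by nlinarith
    · -- long interval
      push_neg at hc2
      have hcard1 : ((Finset.Icc k (k + n)).filter (· ∈ Aset a b R)).card ≤ 2 ^ (m * a) :=
        le_trans hcard (min_le_left _ _)
      have e1 : (((Finset.Icc k (k + n)).filter (· ∈ Aset a b R)).card : ℝ)
          ≤ (2:ℝ) ^ ((m * a : ℕ) : ℝ) := by
        rw [← pow2_cast]; exact_mod_cast hcard1
      have e2 : (2:ℝ) ^ ((m * a : ℕ) : ℝ) ≤ ((2 ^ (m * b) : ℕ) : ℝ) ^ θ := by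
        rw [pow2_cast (m * b), ← Real.rpow_mul (by norm_num)]
        apply mono2
        push_cast
        nlinarith [Nat.cast_nonneg (α := ℝ) m]
      have e3 : ((2 ^ (m * b) : ℕ) : ℝ) ^ θ ≤ ((n : ℝ) + 1) ^ θ := by
        apply Real.rpow_le_rpow (by positivity) _ hθ0
        have : (2 ^ (m * b) : ℕ) ≤ n + 1 := by omega
        exact_mod_cast this
      nlinarith [Real.rpow_nonneg (le_of_lt hL0) θ]
  · -- Case B : interval is long because it reaches back past block m-1
    push_neg at hA
    obtain ⟨hm2', hkle⟩ := hA
    have hm2 : 2 ≤ m := by omega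
    have hcard := total_card_le a b R m (by omega) k n hm'
    -- n is large
    have hnat : (2 ^ (R * (m - 1) * b) : ℤ) + 2 ^ ((m - 1) * b) ≤ 2 ^ (R * m * b - 1) := by
      have e1 : (2 ^ ((m - 1) * b) : ℤ) ≤ 2 ^ (R * (m - 1) * b) :=
        pow_le_pow_right₀ (by norm_num)
          (by calc (m - 1) * b = 1 * (m - 1) * b := by ring
                _ ≤ R * (m - 1) * b := Nat.mul_le_mul (Nat.mul_le_mul hR le_rfl) le_rfl)
      have e2 : (2 ^ (R * (m - 1) * b) : ℤ) + 2 ^ (R * (m - 1) * b) = 2 ^ (R * (m - 1) * b + 1) := by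
        ring
      have e3 : (2 ^ (R * (m - 1) * b + 1) : ℤ) ≤ 2 ^ (R * m * b - 1) := by
        apply pow_le_pow_right₀ (by norm_num)
        have : R * (m - 1) * b + R * b = R * m * b := by
          have : m - 1 + 1 = m := by omega
          calc R * (m - 1) * b + R * b = R * ((m - 1) + 1) * b := by ring
            _ = R * m * b := by rw [this]
        have hRb : 2 ≤ R * b := by
          calc 2 = 1 * 2 := by ring
            _ ≤ R * b := Nat.mul_le_mul hR hb2
        omega
      omega
    have hn_large : (2 ^ (R * m * b - 1) : ℤ) ≤ n := by
      have h1 : (2 ^ (R * m * b) : ℤ) ≤ k + n := hPm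
      have h2 : (2 ^ (R * m * b) : ℤ) - 2 ^ (R * m * b - 1) = 2 ^ (R * m * b - 1) := by
        have h3 : R * m * b - 1 + 1 = R * m * b := by
          have : 1 ≤ R * m * b := by
            calc 1 = 1 * 1 * 1 := by ring
              _ ≤ R * m * b := Nat.mul_le_mul (Nat.mul_le_mul hR hm1) (by omega)
          omega
        calc (2 ^ (R * m * b) : ℤ) - 2 ^ (R * m * b - 1)
            = 2 ^ (R * m * b - 1 + 1) - 2 ^ (R * m * b - 1) := by rw [h3]
          _ = 2 ^ (R * m * b - 1) := by ring
      omega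
    have hn_large' : ((2 ^ (R * m * b - 1) : ℕ) : ℝ) ≤ (n : ℝ) := by
      exact_mod_cast hn_large
    have e1 : (((Finset.Icc k (k + n)).filter (· ∈ Aset a b R)).card : ℝ)
        ≤ (2:ℝ) ^ ((a * m + 1 : ℕ) : ℝ) := by
      rw [← pow2_cast]; exact_mod_cast hcard
    have e2 : (2:ℝ) ^ ((a * m + 1 : ℕ) : ℝ) ≤ ((2 ^ (R * m * b - 1) : ℕ) : ℝ) ^ θ := by
      rw [pow2_cast (R * m * b - 1), ← Real.rpow_mul (by norm_num)]
      apply mono2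
      have := hE3 m (by omega)
      push_cast
      push_cast at this
      linarith
    have e3 : ((2 ^ (R * m * b - 1) : ℕ) : ℝ) ^ θ ≤ ((n : ℝ) + 1) ^ θ :=
      Real.rpow_le_rpow (by positivity) (by linarith) hθ0
    nlinarith [Real.rpow_nonneg (le_of_lt hL0) θ]

end

section
variable (a b R : ℕ)

lemma ennreal_nat_add_one (n : ℕ) : ((n : ℝ≥0∞) + 1) = ENNReal.ofReal ((n : ℝ) + 1) := by
  rw [ENNReal.ofReal_add (Nat.cast_nonneg n) zero_le_one, ENNReal.ofReal_natCast,
    ENNReal.ofReal_one]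

open Classical in
lemma sum_eq_card (p : ℝ) (hp : 1 ≤ p) (k : ℤ) (n : ℕ) :
    ∑ j ∈ Finset.Icc k (k + n), |myx a b R j| ^ p
      = (((Finset.Icc k (k + n)).filter (· ∈ Aset a b R)).card : ℝ) := by
  have h : ∀ j ∈ Finset.Icc k (k + (n : ℤ)), |myx a b R j| ^ p
      = if j ∈ Aset a b R then (1:ℝ) else 0 := by
    intro j _
    by_cases hj : j ∈ Aset a b R <;>
      simp [myx, hj, Real.one_rpow, Real.zero_rpow (by linarith : p ≠ 0)]
  rw [Finset.sum_congr rfl h, Finset.sum_boole]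

open Classical in
lemma dnormStar_myx_le (p q : ℝ) (hp : 1 ≤ p) (hpq : p ≤ q)
    (hcount : ∀ (k : ℤ) (n : ℕ),
      ((((Finset.Icc k (k + n)).filter (· ∈ Aset a b R)).card : ℝ))
        ≤ 2 * ((n : ℝ) + 1) ^ (1 - p / q)) :
    dnormStar p q (myx a b R) ≤ ENNReal.ofReal 2 := by
  have hp0 : (0:ℝ) < p := by linarith
  have hq0 : (0:ℝ) < q := by linarith
  rw [dnormStar]
  refine iSup_le fun k => iSup_le fun n => ?_
  rw [sum_eq_card a b R p hp k n]
  have hL0 : (0:ℝ) < (n : ℝ) + 1 := by positivity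
  rw [ennreal_nat_add_one, ENNReal.ofReal_rpow_of_pos hL0,
    ← ENNReal.ofReal_mul (by positivity)]
  apply ENNReal.ofReal_le_ofReal
  set cd : ℝ := (((Finset.Icc k (k + n)).filter (· ∈ Aset a b R)).card : ℝ) with hcd
  have hcd0 : (0:ℝ) ≤ cd := Nat.cast_nonneg _
  have step1 : cd ^ (1/p) ≤ (2 * ((n : ℝ) + 1) ^ (1 - p / q)) ^ (1/p) :=
    Real.rpow_le_rpow hcd0 (hcount k n) (by positivity)
  have step2 : (2 * ((n : ℝ) + 1) ^ (1 - p / q)) ^ (1/p)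
      = 2 ^ (1/p) * (((n : ℝ) + 1) ^ (1 - p / q)) ^ (1/p) :=
    Real.mul_rpow (by norm_num) (by positivity)
  have step3 : (((n : ℝ) + 1) ^ (1 - p / q)) ^ (1/p) = ((n : ℝ) + 1) ^ ((1 - p / q) * (1/p)) :=
    (Real.rpow_mul hL0.le _ _).symm
  have key : ((n : ℝ) + 1) ^ (1/q - 1/p) * ((n : ℝ) + 1) ^ ((1 - p / q) * (1/p)) = 1 := by
    rw [← Real.rpow_add hL0]
    have : 1/q - 1/p + (1 - p / q) * (1/p) = 0 := by field_simp; ring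
    rw [this, Real.rpow_zero]
  have h2 : (2:ℝ) ^ (1/p) ≤ 2 := by
    calc (2:ℝ) ^ (1/p) ≤ 2 ^ (1:ℝ) :=
          Real.rpow_le_rpow_of_exponent_le one_le_two (by rw [div_le_one hp0]; exact hp)
      _ = 2 := Real.rpow_one 2
  have hz0 : (0:ℝ) ≤ ((n : ℝ) + 1) ^ (1/q - 1/p) := Real.rpow_nonneg hL0.le _
  calc ((n : ℝ) + 1) ^ (1/q - 1/p) * cd ^ (1/p)
      ≤ ((n : ℝ) + 1) ^ (1/q - 1/p) * (2 ^ (1/p) * ((n : ℝ) + 1) ^ ((1 - p / q) * (1/p))) := by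
        rw [← step3, ← step2]
        exact mul_le_mul_of_nonneg_left step1 hz0
    _ = 2 ^ (1/p) * (((n : ℝ) + 1) ^ (1/q - 1/p) * ((n : ℝ) + 1) ^ ((1 - p / q) * (1/p))) := by
        ring
    _ = 2 ^ (1/p) := by rw [key, mul_one]
    _ ≤ 2 := h2

open Classical in
lemma card_ge (hab : a ≤ b) (m : ℕ) (hm : 1 ≤ m) :
    2 ^ (m * a) ≤ ((Finset.Icc (2 ^ (R * m * b) : ℤ)
      ((2 ^ (R * m * b) : ℤ) + ((2 ^ (m * b) - 1 : ℕ) : ℤ))).filter (· ∈ Aset a b R)).card := by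
  rw [← blkF_card a b R m]
  apply Finset.card_le_card
  intro z hz
  rw [Finset.mem_filter, Finset.mem_Icc]
  have h1 := blkF_lb hz
  have h2 := blkF_ub hab hz
  have h3 : (1:ℤ) ≤ 2 ^ (m * (b - a)) := one_le_pow₀ (by norm_num)
  have h4 : (1:ℕ) ≤ 2 ^ (m * b) := Nat.one_le_two_pow
  have h5 : ((2 ^ (m * b) - 1 : ℕ) : ℤ) = (2 ^ (m * b) : ℤ) - 1 := by
    push_cast [Nat.cast_sub h4]
    ring
  exact ⟨⟨h1, by omega⟩, ⟨m, hm, hz⟩⟩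

end

end Stmt12Aux

set_option maxHeartbeats 2000000 in
open Stmt12Aux in
open Classical in
theorem stmt12 (p₁ q₁ p₂ q₂ : ℝ) (hp₁ : 1 ≤ p₁) (h₁ : p₁ ≤ q₁) (hp₂ : 1 ≤ p₂) (h₂ : p₂ ≤ q₂)
    (hincl : ∀ x : ℤ → ℝ, dnormStar p₂ q₂ x ≠ ⊤ → dnormStar p₁ q₁ x ≠ ⊤) :
    p₁ / q₁ ≤ p₂ / q₂ := by
  by_contra hcon
  push_neg at hcon
  have hq₁0 : (0:ℝ) < q₁ := by linarith
  have hq₂0 : (0:ℝ) < q₂ := by linarith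
  have hp₁0 : (0:ℝ) < p₁ := by linarith
  have hp₂0 : (0:ℝ) < p₂ := by linarith
  set θ₁ : ℝ := 1 - p₁ / q₁ with hθ₁def
  set θ₂ : ℝ := 1 - p₂ / q₂ with hθ₂def
  have hθ : θ₁ < θ₂ := by rw [hθ₁def, hθ₂def]; linarith
  have hθ₁0 : 0 ≤ θ₁ := by
    rw [hθ₁def]
    have : p₁ / q₁ ≤ 1 := div_le_one_of_le₀ h₁ hq₁0.le
    linarith
  have hθ₂0 : 0 < θ₂ := lt_of_le_of_lt hθ₁0 hθ
  have hθ₂1 : θ₂ < 1 := by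
    rw [hθ₂def]
    have : 0 < p₂ / q₂ := by positivity
    linarith
  -- choose a rational a/b strictly between θ₁ and θ₂
  obtain ⟨ρ, hρ1, hρ2⟩ := exists_rat_btwn hθ
  have hρpos : (0:ℚ) < ρ := by
    have : (0:ℝ) < (ρ:ℝ) := lt_of_le_of_lt hθ₁0 hρ1
    exact_mod_cast this
  set a : ℕ := ρ.num.toNat with hadef
  set b : ℕ := ρ.den with hbdef
  have hb0 : 0 < b := ρ.pos
  have hnumZ : (a : ℤ) = ρ.num := Int.toNat_of_nonneg (le_of_lt (Rat.num_pos.mpr hρpos))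
  have hρcast : (ρ:ℝ) = (a:ℝ) / (b:ℝ) := by
    rw [Rat.cast_def]
    congr 1
    exact_mod_cast hnumZ.symm
  have ha : 0 < a := by
    by_contra h
    push_neg at h
    interval_cases a
    rw [hρcast] at hρ1
    simp at hρ1
    exact absurd (lt_of_le_of_lt hθ₁0 hρ1) (by norm_num)
  have hbR : (0:ℝ) < (b:ℝ) := by exact_mod_cast hb0
  have hab : a < b := by
    have h3 : (a:ℝ) / (b:ℝ) < 1 := by rw [← hρcast]; linarith
    have h4 : (a:ℝ) < (b:ℝ) := by rwa [div_lt_one hbR] at h3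
    exact_mod_cast h4
  have hE1 : (a:ℝ) ≤ (b:ℝ) * θ₂ := by
    have h3 : (a:ℝ) / (b:ℝ) < θ₂ := by rw [← hρcast]; exact hρ2
    rw [div_lt_iff₀ hbR] at h3
    nlinarith
  have hlow : (b:ℝ) * θ₁ < (a:ℝ) := by
    have h3 : θ₁ < (a:ℝ) / (b:ℝ) := by rw [← hρcast]; exact hρ1
    rw [lt_div_iff₀ hbR] at h3
    nlinarith
  -- choose R
  obtain ⟨R₀, hR₀⟩ := exists_nat_ge (((a:ℝ) + 2) / ((b:ℝ) * θ₂))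
  set R : ℕ := max R₀ 1 with hRdef
  have hR1 : 1 ≤ R := le_max_right _ _
  have hRkey : (a:ℝ) + 2 ≤ (R:ℝ) * (b:ℝ) * θ₂ := by
    have h5 : (R₀:ℝ) ≤ (R:ℝ) := by exact_mod_cast le_max_left R₀ 1
    have h6 : ((a:ℝ) + 2) / ((b:ℝ) * θ₂) ≤ (R:ℝ) := by linarith
    rw [div_le_iff₀ (by positivity)] at h6
    nlinarith
  have hE3 : ∀ m : ℕ, 1 ≤ m → ((a:ℝ) * m + 1) ≤ ((R * m * b - 1 : ℕ) : ℝ) * θ₂ := by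
    intro m hm
    have hm1 : 1 ≤ R * m * b :=
      calc 1 = 1 * 1 * 1 := by ring
        _ ≤ R * m * b := Nat.mul_le_mul (Nat.mul_le_mul hR1 hm) hb0
    have hcast : ((R * m * b - 1 : ℕ) : ℝ) = (R:ℝ) * m * b - 1 := by
      push_cast [Nat.cast_sub hm1]
      ring
    rw [hcast]
    have hmR : (1:ℝ) ≤ (m:ℝ) := by exact_mod_cast hm
    nlinarith [mul_le_mul_of_nonneg_right hRkey (le_of_lt (lt_of_lt_of_le zero_lt_one hmR))]
  -- the test sequence
  have hcount := fun (k : ℤ) (n : ℕ) => count_le a b R ha hab hR1 θ₂ hθ₂0.le hθ₂1.le hE1 hE3 k n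
  have hub := dnormStar_myx_le a b R p₂ q₂ hp₂ h₂ (by
    intro k n
    exact hcount k n)
  have hfin2 : dnormStar p₂ q₂ (myx a b R) ≠ ⊤ :=
    ne_top_of_le_ne_top ENNReal.ofReal_ne_top hub
  have hfin1 : dnormStar p₁ q₁ (myx a b R) ≠ ⊤ := hincl _ hfin2
  clear_value a b R θ₁ θ₂
  -- lower bound blowup
  set ε : ℝ := (b:ℝ) * (1/q₁ - 1/p₁) + (a:ℝ) * (1/p₁) with hεdef
  have hε : 0 < ε := by
    have h3 : (0:ℝ) < p₁ * q₁ := by positivity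
    have hq1 : q₁ ≠ 0 := ne_of_gt hq₁0
    have hp1 : p₁ ≠ 0 := ne_of_gt hp₁0
    have hd : p₁ / q₁ * q₁ = p₁ := div_mul_cancel₀ p₁ hq1
    have e0 : (b:ℝ) * θ₁ * q₁ = (b:ℝ) * q₁ - (b:ℝ) * p₁ := by
      rw [hθ₁def]
      linear_combination (-(b:ℝ)) * hd
    have e1 : (b:ℝ) * q₁ - (b:ℝ) * p₁ < (a:ℝ) * q₁ := by
      have h := mul_lt_mul_of_pos_right hlow hq₁0
      rw [e0] at h
      exact h
    have hi1 : p₁ * (1/p₁) = 1 := mul_one_div_cancel hp1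
    have hi2 : q₁ * (1/q₁) = 1 := mul_one_div_cancel hq1
    have e2 : ε * (p₁ * q₁) = (b:ℝ) * p₁ - (b:ℝ) * q₁ + (a:ℝ) * q₁ := by
      rw [hεdef]
      linear_combination (b:ℝ) * p₁ * hi2 - (b:ℝ) * q₁ * hi1 + (a:ℝ) * q₁ * hi1
    have e3 : 0 < ε * (p₁ * q₁) := by rw [e2]; linarith only [e1]
    nlinarith only [e3, h3]
  clear_value ε
  have hterm : ∀ m : ℕ, 1 ≤ m → (2:ℝ) ^ ((m:ℝ) * ε) ≤ (dnormStar p₁ q₁ (myx a b R)).toReal := by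
    intro m hm
    set k : ℤ := 2 ^ (R * m * b) with hk
    set n : ℕ := 2 ^ (m * b) - 1 with hn
    have h4 : (1:ℕ) ≤ 2 ^ (m * b) := Nat.one_le_two_pow
    have hLeq : (n:ℝ) + 1 = ((2 ^ (m * b) : ℕ) : ℝ) := by
      have : n + 1 = 2 ^ (m * b) := by omega
      exact_mod_cast this
    have hL0 : (0:ℝ) < (n:ℝ) + 1 := by positivity
    have hcardge := card_ge a b R hab.le m hm
    have hreal : (2:ℝ) ^ ((m:ℝ) * ε)
        ≤ ((n:ℝ) + 1) ^ (1/q₁ - 1/p₁)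
          * ((((Finset.Icc k (k + n)).filter (· ∈ Aset a b R)).card : ℝ)) ^ (1/p₁) := by
      have f1 : ((n:ℝ) + 1) ^ (1/q₁ - 1/p₁) = (2:ℝ) ^ (((m * b : ℕ):ℝ) * (1/q₁ - 1/p₁)) := by
        rw [hLeq, pow2_cast]
        exact (Real.rpow_mul (by norm_num) _ _).symm
      have f2 : (2:ℝ) ^ (((m * a : ℕ):ℝ) * (1/p₁))
          ≤ ((((Finset.Icc k (k + n)).filter (· ∈ Aset a b R)).card : ℝ)) ^ (1/p₁) := by
        rw [Real.rpow_mul (by norm_num : (0:ℝ) ≤ 2), ← pow2_cast]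
        apply Real.rpow_le_rpow (by positivity) _ (by positivity)
        rw [hk, hn]
        exact_mod_cast card_ge a b R hab.le m hm
      calc (2:ℝ) ^ ((m:ℝ) * ε)
          = (2:ℝ) ^ (((m * b : ℕ):ℝ) * (1/q₁ - 1/p₁)) * (2:ℝ) ^ (((m * a : ℕ):ℝ) * (1/p₁)) := by
            rw [← Real.rpow_add (by norm_num)]
            congr 1
            push_cast
            rw [hεdef]
            ring
        _ ≤ ((n:ℝ) + 1) ^ (1/q₁ - 1/p₁)
            * ((((Finset.Icc k (k + n)).filter (· ∈ Aset a b R)).card : ℝ)) ^ (1/p₁) := by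
            rw [f1]
            exact mul_le_mul_of_nonneg_left f2 (Real.rpow_nonneg (by norm_num) _)
    have hterm_le : ((n + 1 : ℝ≥0∞) ^ (1 / q₁ - 1 / p₁)) *
        ENNReal.ofReal ((∑ j ∈ Finset.Icc k (k + n), |myx a b R j| ^ p₁) ^ (1 / p₁))
          ≤ dnormStar p₁ q₁ (myx a b R) := by
      rw [dnormStar]
      exact le_iSup₂ (f := fun (k : ℤ) (n : ℕ) => ((n + 1 : ℝ≥0∞) ^ (1 / q₁ - 1 / p₁)) *
        ENNReal.ofReal ((∑ j ∈ Finset.Icc k (k + n), |myx a b R j| ^ p₁) ^ (1 / p₁))) k n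
    have hofreal : ENNReal.ofReal ((2:ℝ) ^ ((m:ℝ) * ε)) ≤ dnormStar p₁ q₁ (myx a b R) := by
      refine le_trans ?_ hterm_le
      rw [sum_eq_card a b R p₁ hp₁ k n, ennreal_nat_add_one, ENNReal.ofReal_rpow_of_pos hL0,
        ← ENNReal.ofReal_mul (by positivity)]
      exact ENNReal.ofReal_le_ofReal hreal
    exact (ENNReal.ofReal_le_iff_le_toReal hfin1).mp hofreal
  -- contradiction : 2^(mε) unbounded
  obtain ⟨M, hM⟩ := pow_unbounded_of_one_lt ((dnormStar p₁ q₁ (myx a b R)).toReal) (show (1:ℝ) < 2 ^ ε by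
    calc (1:ℝ) = 2 ^ (0:ℝ) := (Real.rpow_zero 2).symm
      _ < 2 ^ ε := Real.rpow_lt_rpow_of_exponent_lt one_lt_two hε)
  have hbase : (1:ℝ) ≤ 2 ^ ε := le_of_lt (by
    calc (1:ℝ) = 2 ^ (0:ℝ) := (Real.rpow_zero 2).symm
      _ < 2 ^ ε := Real.rpow_lt_rpow_of_exponent_lt one_lt_two hε)
  have hMM : ((2:ℝ) ^ ε) ^ M ≤ ((2:ℝ) ^ ε) ^ (M + 1) :=
    pow_le_pow_right₀ hbase (by omega)
  have heq : ((2:ℝ) ^ ε) ^ (M + 1) = (2:ℝ) ^ (((M + 1 : ℕ):ℝ) * ε) := by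
    rw [← Real.rpow_natCast ((2:ℝ) ^ ε) (M + 1), ← Real.rpow_mul (by norm_num)]
    rw [mul_comm]
  have := hterm (M + 1) (by omega)
  rw [← heq] at this
  linarith
end

section
/- Let 1 ≤ p_j ≤ q_j < ∞ for j = 1, 2, with q₂ ≤ q₁ and p₁/q₁ < p₂/q₂ (strict). Then the inclusion ℓ^{p₂}_{q₂} ⊆ ℓ^{p₁}_{q₁} is proper, i.e., there exists a sequence in ℓ^{p₁}_{q₁} that is not in ℓ^{p₂}_{q₂}. -/
open scoped ENNReal BigOperators

open scoped NNReal Classical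


/-- n is good iff every base-2^v digit of n is < 2^w. -/
def good (v w n : ℕ) : Prop := ∀ i, n / 2 ^ (i * v) % 2 ^ v < 2 ^ w

noncomputable def cnt (v w a b : ℕ) : ℕ := ((Finset.Ico a b).filter (good v w)).card

lemma good_zero (v w : ℕ) (hw : 1 ≤ w) : good v w 0 := by
  intro i; simpa using Nat.pos_pow_of_pos w (by norm_num)

lemma Ico_eq_biUnion (A B c : ℕ) (hB : 0 < B) :
    Finset.Ico A (A + c * B) =
      (Finset.range c).biUnion (fun d => Finset.Ico (A + d * B) (A + d * B + B)) := by
  ext n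
  simp only [Finset.mem_Ico, Finset.mem_biUnion, Finset.mem_range]
  constructor
  · rintro ⟨h1, h2⟩
    refine ⟨(n - A) / B, ?_, ?_, ?_⟩
    · exact (Nat.div_lt_iff_lt_mul hB).mpr (by omega)
    · have := Nat.div_mul_le_self (n - A) B
      omega
    · have : n - A < ((n - A) / B + 1) * B :=
        (Nat.div_lt_iff_lt_mul hB).mp (Nat.lt_succ_self _)
      have h3 : ((n - A) / B + 1) * B = (n - A) / B * B + B := by ring
      omega
  · rintro ⟨d, hd, h1, h2⟩
    have : (d + 1) * B ≤ c * B := Nat.mul_le_mul_right _ hd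
    have h3 : (d + 1) * B = d * B + B := by ring
    omega

lemma cnt_block_le (v w : ℕ) (hwv : w ≤ v) :
    ∀ m a, cnt v w (a * 2 ^ (m * v)) ((a + 1) * 2 ^ (m * v)) ≤ 2 ^ (m * w) := by
  intro m
  induction m with
  | zero =>
    intro a
    simp only [Nat.zero_mul, pow_zero, Nat.mul_one]
    calc cnt v w a (a + 1) ≤ (Finset.Ico a (a + 1)).card := Finset.card_filter_le _ _
      _ = 1 := by simp
  | succ m ih =>
    intro a
    have hB : 0 < 2 ^ (m * v) := Nat.pow_pos (by norm_num)
    have hsplit : (a + 1) * 2 ^ ((m + 1) * v) = a * 2 ^ ((m + 1) * v) + 2 ^ v * 2 ^ (m * v) := by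
      rw [show (m + 1) * v = m * v + v by ring, pow_add]; ring
    have hpow : 2 ^ ((m + 1) * v) = 2 ^ (m * v) * 2 ^ v := by
      rw [show (m + 1) * v = m * v + v by ring, pow_add]
    rw [cnt, hsplit, Ico_eq_biUnion _ _ _ hB, Finset.filter_biUnion]
    refine le_trans Finset.card_biUnion_le ?_
    have hstep : ∀ d ∈ Finset.range (2 ^ v),
        ((Finset.Ico (a * 2 ^ ((m+1)*v) + d * 2 ^ (m*v))
          (a * 2 ^ ((m+1)*v) + d * 2 ^ (m*v) + 2 ^ (m*v))).filter (good v w)).card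
        ≤ (if d < 2 ^ w then 2 ^ (m * w) else 0) := by
      intro d hd
      rw [Finset.mem_range] at hd
      by_cases hdw : d < 2 ^ w
      · simp only [hdw, if_true]
        have heq : a * 2 ^ ((m+1)*v) + d * 2 ^ (m*v) = (a * 2 ^ v + d) * 2 ^ (m*v) := by
          rw [hpow]; ring
        have heq2 : a * 2 ^ ((m+1)*v) + d * 2 ^ (m*v) + 2 ^ (m*v)
            = (a * 2 ^ v + d + 1) * 2 ^ (m*v) := by rw [hpow]; ring
        rw [heq2, heq]
        exact ih (a * 2 ^ v + d)
      · simp only [hdw, if_false, Nat.le_zero, Finset.card_eq_zero,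
          Finset.filter_eq_empty_iff]
        intro n hn hg
        rw [Finset.mem_Ico] at hn
        have heq : (a * 2 ^ v + d) * 2 ^ (m*v) = a * 2 ^ ((m+1)*v) + d * 2 ^ (m*v) := by
          rw [hpow]; ring
        have heq2 : (a * 2 ^ v + d + 1) * 2 ^ (m*v)
            = a * 2 ^ ((m+1)*v) + d * 2 ^ (m*v) + 2 ^ (m*v) := by rw [hpow]; ring
        have hdiv : n / 2 ^ (m * v) = a * 2 ^ v + d := by
          apply Nat.div_eq_of_lt_le
          · rw [heq]; exact hn.1
          · rw [heq2]; exact hn.2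
        have := hg m
        rw [hdiv, show a * 2 ^ v + d = d + a * 2 ^ v by ring, Nat.add_mul_mod_self_right,
          Nat.mod_eq_of_lt hd] at this
        exact hdw this
    refine le_trans (Finset.sum_le_sum hstep) ?_
    have hfil : (Finset.range (2 ^ v)).filter (fun d => d < 2 ^ w) = Finset.range (2 ^ w) := by
      have hle : (2:ℕ) ^ w ≤ 2 ^ v := Nat.pow_le_pow_right (by norm_num) (by omega)
      ext d
      simp only [Finset.mem_filter, Finset.mem_range]
      exact ⟨fun h => h.2, fun h => ⟨lt_of_lt_of_le h hle, h⟩⟩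
    rw [← Finset.sum_filter, hfil, Finset.sum_const, Finset.card_range, smul_eq_mul,
      show (m+1)*w = w + m*w by ring, pow_add]

lemma cnt_le_two_mul (v w : ℕ) (hwv : w ≤ v) (m a b : ℕ) (h : b ≤ a + 2 ^ (m * v)) :
    cnt v w a b ≤ 2 * 2 ^ (m * w) := by
  set B := 2 ^ (m * v) with hBdef
  have hB : 0 < B := Nat.pow_pos (by norm_num)
  have hsub : Finset.Ico a b ⊆ Finset.Ico (a / B * B) ((a / B + 2) * B) := by
    intro n hn
    rw [Finset.mem_Ico] at hn ⊢
    constructor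
    · exact le_trans (Nat.div_mul_le_self a B) hn.1
    · have h1 : a < (a / B + 1) * B := (Nat.div_lt_iff_lt_mul hB).mp (Nat.lt_succ_self _)
      have h2 : (a / B + 1) * B = a / B * B + B := by ring
      have h3 : (a / B + 2) * B = a / B * B + B + B := by ring
      omega
  have hsplit : Finset.Ico (a / B * B) ((a / B + 2) * B)
      = Finset.Ico (a / B * B) ((a / B + 1) * B) ∪ Finset.Ico ((a / B + 1) * B) ((a / B + 2) * B) := by
    rw [Finset.Ico_union_Ico_eq_Ico]
    · exact Nat.mul_le_mul_right _ (by omega)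
    · exact Nat.mul_le_mul_right _ (by omega)
  calc cnt v w a b ≤ ((Finset.Ico (a / B * B) ((a / B + 2) * B)).filter (good v w)).card :=
        Finset.card_le_card (Finset.filter_subset_filter _ hsub)
    _ ≤ cnt v w (a / B * B) ((a / B + 1) * B) + cnt v w ((a / B + 1) * B) ((a / B + 2) * B) := by
        rw [hsplit, Finset.filter_union]; exact Finset.card_union_le _ _
    _ ≤ 2 ^ (m * w) + 2 ^ (m * w) := by
        refine Nat.add_le_add ?_ ?_
        · exact cnt_block_le v w hwv m (a / B)
        · have := cnt_block_le v w hwv m (a / B + 1)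
          simpa [show a / B + 1 + 1 = a / B + 2 by ring] using this
    _ = 2 * 2 ^ (m * w) := by ring

lemma two_pow_le_cnt (v w : ℕ) (hw : 1 ≤ w) (hwv : w ≤ v) :
    ∀ m, 2 ^ (m * w) ≤ cnt v w 0 (2 ^ (m * v)) := by
  intro m
  induction m with
  | zero =>
    simp only [Nat.zero_mul, pow_zero]
    refine Finset.card_pos.mpr ⟨0, ?_⟩
    rw [Finset.mem_filter, Finset.mem_Ico]
    exact ⟨⟨le_refl 0, by norm_num⟩, good_zero v w hw⟩
  | succ m ih =>
    have hB : 0 < 2 ^ (m * v) := Nat.pow_pos (by norm_num)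
    have hpow : 2 ^ ((m + 1) * v) = 2 ^ (m * v) * 2 ^ v := by
      rw [show (m + 1) * v = m * v + v by ring, pow_add]
    have hwle : (2:ℕ) ^ w ≤ 2 ^ v := Nat.pow_le_pow_right (by norm_num) hwv
    set s := (Finset.range (2 ^ w)) ×ˢ ((Finset.Ico 0 (2 ^ (m * v))).filter (good v w)) with hs
    have hcard : s.card = 2 ^ w * cnt v w 0 (2 ^ (m * v)) := by
      rw [hs, Finset.card_product, Finset.card_range]; rfl
    have hkey : s.card ≤ cnt v w 0 (2 ^ ((m + 1) * v)) := by
      apply Finset.card_le_card_of_injOn (fun p => p.1 * 2 ^ (m * v) + p.2)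
      · rintro ⟨d, r⟩ hp
        simp only [hs, Finset.coe_product, Set.mem_prod, Finset.mem_coe, Finset.mem_range, Finset.mem_filter, Finset.mem_Ico] at hp
        obtain ⟨hd, ⟨⟨-, hr⟩, hgr⟩⟩ := hp
        have hlt : d * 2 ^ (m * v) + r < 2 ^ ((m + 1) * v) := by
          have h1 : d + 1 ≤ 2 ^ v := le_trans hd hwle
          calc d * 2 ^ (m * v) + r < (d + 1) * 2 ^ (m * v) := by
                have : (d+1) * 2 ^ (m*v) = d * 2 ^ (m*v) + 2 ^ (m*v) := by ring
                omega
            _ ≤ 2 ^ v * 2 ^ (m * v) := Nat.mul_le_mul_right _ h1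
            _ = 2 ^ ((m + 1) * v) := by rw [hpow]; ring
        rw [Finset.mem_coe, Finset.mem_filter, Finset.mem_Ico]
        refine ⟨⟨Nat.zero_le _, hlt⟩, ?_⟩
        intro i
        rcases lt_trichotomy i m with him | him | him
        · -- i < m : digit of r
          have hdecomp : 2 ^ (m * v) = 2 ^ ((m - i) * v) * 2 ^ (i * v) := by
            rw [← pow_add, ← Nat.add_mul, Nat.sub_add_cancel him.le]
          have hdiv : (d * 2 ^ (m * v) + r) / 2 ^ (i * v)
              = r / 2 ^ (i * v) + d * 2 ^ ((m - i) * v) := by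
            rw [show d * 2 ^ (m * v) + r = r + d * 2 ^ ((m - i) * v) * 2 ^ (i * v) by
              rw [Nat.mul_assoc, ← hdecomp]; ring]
            exact Nat.add_mul_div_right _ _ (Nat.pow_pos (by norm_num))
          have hmod : (r / 2 ^ (i * v) + d * 2 ^ ((m - i) * v)) % 2 ^ v
              = r / 2 ^ (i * v) % 2 ^ v := by
            have h2 : 2 ^ ((m - i) * v) = 2 ^ ((m - i - 1) * v) * 2 ^ v := by
              rw [← pow_add]
              congr 1
              have : m - i - 1 + 1 = m - i := by omega
              nlinarith [this]
            rw [h2, ← Nat.mul_assoc, Nat.add_mul_mod_self_right]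
          rw [hdiv, hmod]
          exact hgr i
        · -- i = m : digit is d
          subst him
          have hdiv : (d * 2 ^ (i * v) + r) / 2 ^ (i * v) = d := by
            rw [show d * 2 ^ (i * v) + r = r + d * 2 ^ (i * v) by ring,
              Nat.add_mul_div_right _ _ hB, Nat.div_eq_of_lt hr]
            omega
          rw [hdiv, Nat.mod_eq_of_lt (lt_of_lt_of_le hd hwle)]
          exact hd
        · -- i > m : digit is 0
          have : d * 2 ^ (m * v) + r < 2 ^ (i * v) := by
            refine lt_of_lt_of_le hlt (Nat.pow_le_pow_right (by norm_num) ?_)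
            exact Nat.mul_le_mul_right _ him
          rw [Nat.div_eq_of_lt this]
          simpa using Nat.two_pow_pos w
      · rintro ⟨d, r⟩ hp ⟨d', r'⟩ hp' heq
        simp only [hs, Finset.coe_product, Set.mem_prod, Finset.mem_coe, Finset.mem_range,
          Finset.mem_filter, Finset.mem_Ico] at hp hp'
        simp only at heq
        have hr : r < 2 ^ (m * v) := hp.2.1.2
        have hr' : r' < 2 ^ (m * v) := hp'.2.1.2
        have h1 : d = d' := by
          have e1 : (d * 2 ^ (m * v) + r) / 2 ^ (m * v) = d := by
            rw [show d * 2 ^ (m * v) + r = r + d * 2 ^ (m * v) by ring,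
              Nat.add_mul_div_right _ _ hB, Nat.div_eq_of_lt hr]
            omega
          have e2 : (d' * 2 ^ (m * v) + r') / 2 ^ (m * v) = d' := by
            rw [show d' * 2 ^ (m * v) + r' = r' + d' * 2 ^ (m * v) by ring,
              Nat.add_mul_div_right _ _ hB, Nat.div_eq_of_lt hr']
            omega
          rw [← e1, ← e2, heq]
        have h2 : r = r' := by
          subst h1
          omega
        simp [h1, h2]
    calc 2 ^ ((m + 1) * w) = 2 ^ w * 2 ^ (m * w) := by
          rw [show (m+1)*w = w + m*w by ring, pow_add]
      _ ≤ 2 ^ w * cnt v w 0 (2 ^ (m * v)) := Nat.mul_le_mul_left _ ih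
      _ = s.card := hcard.symm
      _ ≤ cnt v w 0 (2 ^ ((m + 1) * v)) := hkey

def Aset (v w : ℕ) : Set ℤ := {m | ∃ n : ℕ, good v w n ∧ m = (n : ℤ)}

noncomputable def xind (v w : ℕ) : ℤ → ℝ := Set.indicator (Aset v w) 1

lemma sum_xind (v w : ℕ) (p : ℝ) (hp : p ≠ 0) (s : Finset ℤ) :
    ∑ j ∈ s, |xind v w j| ^ p = (((s.filter (· ∈ Aset v w)).card : ℕ) : ℝ) := by
  rw [← Finset.sum_boole]
  apply Finset.sum_congr rfl
  intro j _
  by_cases h : j ∈ Aset v w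
  · simp [xind, Set.indicator_of_mem h, h, Real.one_rpow]
  · simp [xind, Set.indicator_of_notMem h, h, Real.zero_rpow hp]

lemma cardZ_le (v w : ℕ) (k : ℤ) (N : ℕ) :
    ((Finset.Icc k (k + N)).filter (· ∈ Aset v w)).card
      ≤ cnt v w k.toNat (k + N + 1).toNat := by
  rw [cnt]
  refine Finset.card_le_card_of_injOn (fun j => j.toNat) ?_ ?_
  · intro j hj
    rw [Finset.mem_coe, Finset.mem_filter, Finset.mem_Icc] at hj
    obtain ⟨⟨h1, h2⟩, n, hg, he⟩ := hj
    subst he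
    rw [Finset.mem_coe, Finset.mem_filter, Finset.mem_Ico]
    refine ⟨⟨by simp only [Int.toNat_natCast]; omega, by simp only [Int.toNat_natCast]; omega⟩, by simpa using hg⟩
  · intro j hj j' hj' h
    simp only [Finset.coe_filter, Set.mem_setOf_eq, Finset.mem_coe, Finset.mem_Icc] at hj hj'
    obtain ⟨-, n, -, rfl⟩ := hj
    obtain ⟨-, n', -, rfl⟩ := hj'
    simp only at h
    omega

lemma le_cardZ (v w m : ℕ) :
    cnt v w 0 (2 ^ (m * v))
      ≤ ((Finset.Icc (0:ℤ) (0 + ((2 ^ (m * v) - 1 : ℕ) : ℤ))).filter (· ∈ Aset v w)).card := by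
  rw [cnt]
  refine Finset.card_le_card_of_injOn (fun n => (n : ℤ)) ?_ ?_
  · intro n hn
    rw [Finset.mem_coe, Finset.mem_filter, Finset.mem_Ico] at hn
    obtain ⟨⟨-, h2⟩, hg⟩ := hn
    rw [Finset.mem_coe, Finset.mem_filter, Finset.mem_Icc]
    have h1 : (1:ℕ) ≤ 2 ^ (m * v) := Nat.one_le_two_pow
    refine ⟨⟨by positivity, by simp only []; omega⟩, n, hg, rfl⟩
  · intro n _ n' _ h
    simp only at h
    exact_mod_cast h

lemma dnormStar_xind_le (v w : ℕ) (hw : 1 ≤ w) (hwv : w ≤ v) (p q : ℝ)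
    (hp : 1 ≤ p) (hq : 0 < q)
    (hexp : 1 / q - 1 / p + (w : ℝ) / (v * p) ≤ 0) :
    dnormStar p q (xind v w) ≤ ENNReal.ofReal ((2:ℝ) ^ (((w:ℝ) + 1) / p)) := by
  have hp0 : (0:ℝ) < p := lt_of_lt_of_le one_pos hp
  have hv : 1 ≤ v := le_trans hw hwv
  have hv0 : (0:ℝ) < v := by exact_mod_cast hv
  set C := ENNReal.ofReal ((2:ℝ) ^ (((w:ℝ) + 1) / p)) with hC
  rw [dnormStar]
  refine iSup_le fun k => iSup_le fun N => ?_
  set S : ℕ := ((Finset.Icc k (k + (N:ℤ))).filter (· ∈ Aset v w)).card with hSdef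
  have hsum : ∑ j ∈ Finset.Icc k (k + (N:ℤ)), |xind v w j| ^ p = (S : ℝ) :=
    sum_xind v w p (ne_of_gt hp0) _
  set m : ℕ := Nat.clog (2 ^ v) (N + 1) with hm
  clear_value m
  have hb : 1 < 2 ^ v := by
    calc (1:ℕ) < 2 := one_lt_two
      _ ≤ 2 ^ v := Nat.le_self_pow (by omega) 2
  have hNle : N + 1 ≤ 2 ^ (m * v) := by
    have h := Nat.le_pow_clog hb (N + 1)
    rwa [← hm, ← pow_mul, Nat.mul_comm v m] at h
  have hScnt : S ≤ 2 * 2 ^ (m * w) := by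
    refine le_trans (cardZ_le v w k N) ?_
    refine cnt_le_two_mul v w hwv m _ _ (by omega)
  have hone_le : (1:ℝ) ≤ ((N:ℝ) + 1) := by have := Nat.cast_nonneg (α:=ℝ) N; linarith
  have hmain : ((2:ℝ)) ^ (m * w) ≤ 2 ^ w * ((N:ℝ) + 1) ^ ((w:ℝ) / v) := by
    rcases Nat.eq_zero_or_pos m with hm0 | hmpos
    · rw [hm0, Nat.zero_mul, pow_zero]
      have h1 : (1:ℝ) ≤ ((N:ℝ)+1) ^ ((w:ℝ)/v) := Real.one_le_rpow hone_le (by positivity)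
      have h2 : (1:ℝ) ≤ (2:ℝ) ^ w := one_le_pow₀ (by norm_num)
      nlinarith
    · obtain ⟨m', rfl⟩ : ∃ m', m = m' + 1 := ⟨m - 1, by omega⟩
      have hN1 : 1 < N + 1 := by
        rcases Nat.eq_zero_or_pos N with rfl | hN
        · rw [hm] at hmpos; simp [Nat.clog_one_right] at hmpos
        · omega
      have hlt : 2 ^ (m' * v) < N + 1 := by
        have h := Nat.pow_pred_clog_lt_self hb hN1
        rw [← hm] at h
        simp only [Nat.pred_succ] at h
        rw [← pow_mul, Nat.mul_comm v m'] at h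
        exact h
      have hltR : ((2:ℝ)) ^ (m' * v) ≤ (N:ℝ) + 1 := by
        have : ((2:ℝ)) ^ (m' * v) < (N:ℝ) + 1 := by exact_mod_cast hlt
        linarith
      have key : (((2:ℝ)) ^ (m' * v)) ^ ((w:ℝ)/v) = 2 ^ (m' * w) := by
        rw [← Real.rpow_natCast 2 (m' * v), ← Real.rpow_mul (by norm_num),
          ← Real.rpow_natCast 2 (m' * w)]
        congr 1
        push_cast
        field_simp
      have mono : (((2:ℝ)) ^ (m' * v)) ^ ((w:ℝ)/v) ≤ ((N:ℝ)+1) ^ ((w:ℝ)/v) :=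
        Real.rpow_le_rpow (by positivity) hltR (by positivity)
      rw [key] at mono
      have hsplit : ((2:ℝ)) ^ ((m' + 1) * w) = 2 ^ w * 2 ^ (m' * w) := by
        rw [← pow_add]
        congr 1
        ring
      rw [hsplit]
      have h2w : (0:ℝ) ≤ 2 ^ w := by positivity
      exact mul_le_mul_of_nonneg_left mono h2w
  have hSreal : (S:ℝ) ≤ (2:ℝ) ^ (((w:ℝ)+1)) * ((N:ℝ)+1) ^ ((w:ℝ)/v) := by
    have h1 : (S:ℝ) ≤ 2 * (2:ℝ)^(m*w) := by exact_mod_cast hScnt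
    have h2 : 2 * (2:ℝ)^(m*w) ≤ 2 * ((2:ℝ)^w * ((N:ℝ)+1)^((w:ℝ)/v)) := by
      nlinarith
    have h3 : 2 * ((2:ℝ)^w * ((N:ℝ)+1)^((w:ℝ)/v)) = (2:ℝ) ^ (((w:ℝ)+1)) * ((N:ℝ)+1)^((w:ℝ)/v) := by
      rw [show ((w:ℝ)+1) = ((w+1:ℕ):ℝ) by push_cast; ring, Real.rpow_natCast, pow_add]
      ring
    linarith
  have hS13 : (S:ℝ) ^ (1/p) ≤ ((2:ℝ) ^ (((w:ℝ)+1)/p)) * ((N:ℝ)+1) ^ ((w:ℝ)/((v:ℝ)*p)) := by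
    have h0 : (0:ℝ) ≤ (S:ℝ) := Nat.cast_nonneg _
    have h := Real.rpow_le_rpow h0 hSreal (by positivity : (0:ℝ) ≤ 1/p)
    rw [Real.mul_rpow (by positivity) (by positivity), ← Real.rpow_mul (by norm_num),
      ← Real.rpow_mul (by positivity)] at h
    have e1 : ((w:ℝ)+1) * (1/p) = ((w:ℝ)+1)/p := by ring
    have e2 : (w:ℝ)/v * (1/p) = (w:ℝ)/((v:ℝ)*p) := by
      field_simp
    rw [e1, e2] at h
    exact h
  have hLne0 : ((N:ℝ≥0∞)+1) ≠ 0 := by simp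
  have hLnetop : ((N:ℝ≥0∞)+1) ≠ ⊤ := by
    simp [ENNReal.add_eq_top]
  have hofReal : ENNReal.ofReal ((S:ℝ) ^ (1/p)) ≤ C * ((N:ℝ≥0∞)+1) ^ ((w:ℝ)/((v:ℝ)*p)) := by
    refine le_trans (ENNReal.ofReal_le_ofReal hS13) ?_
    rw [ENNReal.ofReal_mul (by positivity)]
    rw [hC]
    apply mul_le_mul_right
    rw [← ENNReal.ofReal_rpow_of_pos (by positivity)]
    apply ENNReal.rpow_le_rpow _ (by positivity)
    rw [ENNReal.ofReal_add (by positivity) (by norm_num)]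
    simp
  calc ((N:ℝ≥0∞) + 1) ^ (1 / q - 1 / p) *
        ENNReal.ofReal ((∑ j ∈ Finset.Icc k (k + (N:ℤ)), |xind v w j| ^ p) ^ (1 / p))
      = ((N:ℝ≥0∞) + 1) ^ (1 / q - 1 / p) * ENNReal.ofReal ((S:ℝ) ^ (1/p)) := by rw [hsum]
    _ ≤ ((N:ℝ≥0∞) + 1) ^ (1 / q - 1 / p) * (C * ((N:ℝ≥0∞)+1) ^ ((w:ℝ)/((v:ℝ)*p))) :=
        mul_le_mul_right hofReal _
    _ = C * (((N:ℝ≥0∞) + 1) ^ (1 / q - 1 / p) * ((N:ℝ≥0∞)+1) ^ ((w:ℝ)/((v:ℝ)*p))) := by ring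
    _ = C * ((N:ℝ≥0∞) + 1) ^ (1 / q - 1 / p + (w:ℝ)/((v:ℝ)*p)) := by
        rw [ENNReal.rpow_add _ _ hLne0 hLnetop]
    _ ≤ C * 1 := by
        apply mul_le_mul_right
        calc ((N:ℝ≥0∞) + 1) ^ (1 / q - 1 / p + (w:ℝ)/((v:ℝ)*p))
            ≤ ((N:ℝ≥0∞) + 1) ^ (0:ℝ) :=
              ENNReal.rpow_le_rpow_of_exponent_le (by simp) hexp
          _ = 1 := ENNReal.rpow_zero
    _ = C := mul_one C

lemma eq_top_of_pow_le {a S : ℝ≥0∞} (ha : 1 < a) (hatop : a ≠ ⊤)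
    (h : ∀ m : ℕ, a ^ m ≤ S) : S = ⊤ := by
  by_contra hS
  lift S to ℝ≥0 using hS
  lift a to ℝ≥0 using hatop
  have ha' : 1 < a := by exact_mod_cast ha
  obtain ⟨n, hn⟩ := pow_unbounded_of_one_lt S ha'
  have h2 := h n
  rw [← ENNReal.coe_pow, ENNReal.coe_le_coe] at h2
  exact absurd hn (not_lt.mpr h2)

lemma dnormStar_xind_top (v w : ℕ) (hw : 1 ≤ w) (hwv : w ≤ v) (p q : ℝ)
    (hp : 1 ≤ p) (hq : 0 < q)
    (hexp : 0 < (v:ℝ) * (1/q - 1/p) + (w:ℝ)/p) :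
    dnormStar p q (xind v w) = ⊤ := by
  have hp0 : (0:ℝ) < p := lt_of_lt_of_le one_pos hp
  set e : ℝ := (v:ℝ) * (1/q - 1/p) + (w:ℝ)/p with he
  refine eq_top_of_pow_le (a := (2:ℝ≥0∞) ^ e) ?_ ?_ ?_
  · exact ENNReal.one_lt_rpow (by norm_num) hexp
  · exact ENNReal.rpow_ne_top_of_nonneg (le_of_lt hexp) (by norm_num)
  intro m
  set L : ℕ := 2 ^ (m * v) with hL
  have hL1 : 1 ≤ L := Nat.one_le_two_pow
  set N : ℕ := L - 1 with hN
  set S : ℕ := ((Finset.Icc (0:ℤ) ((0:ℤ) + (N:ℤ))).filter (· ∈ Aset v w)).card with hSdef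
  have hcoef : ((N:ℝ≥0∞) + 1) = ((L:ℕ):ℝ≥0∞) := by
    rw [show L = N + 1 by omega]
    push_cast
    ring
  have hcnt : 2 ^ (m * w) ≤ S := by
    refine le_trans (two_pow_le_cnt v w hw hwv m) ?_
    exact le_cardZ v w m
  have hsum : ∑ j ∈ Finset.Icc (0:ℤ) ((0:ℤ) + (N:ℤ)), |xind v w j| ^ p = (S : ℝ) :=
    sum_xind v w p (ne_of_gt hp0) _
  have e1def : True := trivial
  have h2ne0 : (2:ℝ≥0∞) ≠ 0 := by norm_num
  have h2netop : (2:ℝ≥0∞) ≠ ⊤ := by norm_num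
  have hLc : ((L:ℕ):ℝ≥0∞) = (2:ℝ≥0∞) ^ (((m*v : ℕ)):ℝ) := by
    rw [hL, ENNReal.rpow_natCast]
    push_cast
    rfl
  have hof : ENNReal.ofReal ((((2:ℝ)) ^ (m*w)) ^ (1/p)) = (2:ℝ≥0∞) ^ (((m*w:ℕ):ℝ) * (1/p)) := by
    rw [← Real.rpow_natCast 2 (m*w), ← Real.rpow_mul (by norm_num)]
    rw [← ENNReal.ofReal_rpow_of_pos (by norm_num)]
    norm_num
  have hterm : (2:ℝ≥0∞) ^ ((m:ℝ) * e)
      ≤ ((N:ℝ≥0∞) + 1) ^ (1 / q - 1 / p) *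
        ENNReal.ofReal ((∑ j ∈ Finset.Icc (0:ℤ) ((0:ℤ) + (N:ℤ)), |xind v w j| ^ p) ^ (1 / p)) := by
    rw [hsum, hcoef, hLc, ← ENNReal.rpow_mul]
    have hmono : ENNReal.ofReal ((((2:ℝ)) ^ (m*w)) ^ (1/p)) ≤ ENNReal.ofReal ((S:ℝ) ^ (1/p)) := by
      apply ENNReal.ofReal_le_ofReal
      apply Real.rpow_le_rpow (by positivity) _ (by positivity)
      exact_mod_cast hcnt
    refine le_trans ?_ (mul_le_mul_right hmono _)
    rw [hof, ← ENNReal.rpow_add _ _ h2ne0 h2netop]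
    apply le_of_eq
    congr 1
    push_cast
    rw [he]
    ring
  have hpow : ((2:ℝ≥0∞) ^ e) ^ m = (2:ℝ≥0∞) ^ ((m:ℝ) * e) := by
    rw [← ENNReal.rpow_natCast ((2:ℝ≥0∞) ^ e) m, ← ENNReal.rpow_mul, mul_comm]
  rw [hpow]
  refine le_trans hterm ?_
  rw [dnormStar]
  exact le_iSup₂ (f := fun (k : ℤ) (n : ℕ) => ((n + 1 : ℝ≥0∞) ^ (1 / q - 1 / p)) *
    ENNReal.ofReal ((∑ j ∈ Finset.Icc k (k + n), |xind v w j| ^ p) ^ (1 / p))) 0 N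


theorem stmt13 (p₁ q₁ p₂ q₂ : ℝ) (hp₁ : 1 ≤ p₁) (h₁ : p₁ ≤ q₁) (hp₂ : 1 ≤ p₂) (h₂ : p₂ ≤ q₂)
    (hq : q₂ ≤ q₁) (hpq : p₁ / q₁ < p₂ / q₂) :
    ∃ x : ℤ → ℝ, dnormStar p₁ q₁ x ≠ ⊤ ∧ dnormStar p₂ q₂ x = ⊤ := by
  have hp₁0 : (0:ℝ) < p₁ := lt_of_lt_of_le one_pos hp₁
  have hp₂0 : (0:ℝ) < p₂ := lt_of_lt_of_le one_pos hp₂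
  have hq₁0 : (0:ℝ) < q₁ := lt_of_lt_of_le hp₁0 h₁
  have hq₂0 : (0:ℝ) < q₂ := lt_of_lt_of_le hp₂0 h₂
  have hθ : 1 - p₂/q₂ < 1 - p₁/q₁ := by linarith
  obtain ⟨t, ht₂, ht₁⟩ := exists_rat_btwn hθ
  have h0 : (0:ℝ) ≤ 1 - p₂/q₂ := by
    have : p₂/q₂ ≤ 1 := (div_le_one hq₂0).mpr h₂
    linarith
  have htpos : 0 < t := by
    have : (0:ℝ) < (t:ℝ) := lt_of_le_of_lt h0 ht₂
    exact_mod_cast this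
  have htlt1 : t < 1 := by
    have hpq1 : (0:ℝ) < p₁/q₁ := by positivity
    have : (t:ℝ) < 1 := by linarith
    exact_mod_cast this
  set w : ℕ := t.num.toNat with hwdef
  set v : ℕ := t.den with hvdef
  have hnum : 0 < t.num := Rat.num_pos.mpr htpos
  have hw1 : 1 ≤ w := by rw [hwdef]; omega
  have hvpos : 0 < v := t.pos
  have hden : (0:ℝ) < (v:ℝ) := by exact_mod_cast hvpos
  have htval : ((w:ℝ)/(v:ℝ)) = (t:ℝ) := by
    rw [Rat.cast_def]
    congr 1
    rw [hwdef]
    have h' : (t.num.toNat : ℤ) = t.num := Int.toNat_of_nonneg hnum.le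
    exact_mod_cast h'
  have hwv : w ≤ v := by
    have hlt := Rat.lt_one_iff_num_lt_denom.mpr htlt1
    rw [hwdef, hvdef]
    omega
  have ht1' : (w:ℝ)/(v:ℝ) ≤ 1 - p₁/q₁ := by rw [htval]; exact le_of_lt ht₁
  have ht2' : 1 - p₂/q₂ < (w:ℝ)/(v:ℝ) := by rw [htval]; exact ht₂
  refine ⟨xind v w, ?_, ?_⟩
  · -- finite for (p₁, q₁)
    refine ne_top_of_le_ne_top ENNReal.ofReal_ne_top
      (dnormStar_xind_le v w hw1 hwv p₁ q₁ hp₁ hq₁0 ?_)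
    have h1 : (w:ℝ)/v/p₁ ≤ (1 - p₁/q₁)/p₁ := by gcongr
    have h2 : (1 - p₁/q₁)/p₁ = 1/p₁ - 1/q₁ := by field_simp
    have h3 : (w:ℝ)/((v:ℝ)*p₁) = (w:ℝ)/v/p₁ := by
      rw [div_div]
    linarith
  · -- infinite for (p₂, q₂)
    refine dnormStar_xind_top v w hw1 hwv p₂ q₂ hp₂ hq₂0 ?_
    have h1 : (1 - p₂/q₂)/p₂ < (w:ℝ)/v/p₂ := by gcongr
    have h2 : (1 - p₂/q₂)/p₂ = 1/p₂ - 1/q₂ := by field_simp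
    have hsum : 0 < 1/q₂ - 1/p₂ + ((w:ℝ)/v)/p₂ := by linarith
    have hpos := mul_pos hden hsum
    have hrw : (v:ℝ) * (1/q₂ - 1/p₂ + ((w:ℝ)/v)/p₂) = (v:ℝ)*(1/q₂ - 1/p₂) + (w:ℝ)/p₂ := by
      field_simp
    linarith [hpos, hrw.symm ▸ hpos]
end

section
/- For 1 ≤ p₁ < p₂ ≤ q < ∞, the inclusion M^{p₂}_q(ℝ) ⊊ M^{p₁}_q(ℝ) is proper: there exists a step function f taking only values 0 and 1 on unit intervals [j, j+1), j ∈ ℤ, with f ∈ M^{p₁}_q(ℝ) and f ∉ M^{p₂}_q(ℝ). -/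
open scoped ENNReal BigOperators

/-!
Fix `1 - p₂ / q < α ≤ 1 - p₁ / q` and let `x j = ⌊(j + 1) ^ α⌋ - ⌊j ^ α⌋ ∈ {0, 1}`. Its partial
sums telescope, so by subadditivity of `t ↦ t ^ α` every window of `ℓ` consecutive indices holds
at most `ℓ ^ α + 1` ones, while `[0, n)` holds `⌊n ^ α⌋` of them. Thus `∫ |x̃| ^ p` over an
interval of length `L ≥ 1` is of order `L ^ α`, and the Morrey quotient
`L ^ (1/q - 1/p) * (L ^ α) ^ (1/p)` stays bounded exactly when `α ≤ 1 - p / q`.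
-/

open MeasureTheory Filter

section StepFunction

variable (x : ℤ → ℝ)

lemma step_eqOn_Ioo (k : ℤ) : Set.EqOn (step x) (fun _ => x k) (Set.Ioo (k : ℝ) (k + 1)) := by
  intro t ht
  simp only [step, Int.floor_eq_iff.2 ⟨ht.1.le, ht.2⟩]

lemma intervalIntegrable_step_unit (k : ℤ) :
    IntervalIntegrable (step x) volume (k : ℝ) (k + 1) :=
  (intervalIntegrable_const (c := x k)).congr_uIoo <| by
    rw [Set.uIoo_of_le (by linarith)]
    exact (step_eqOn_Ioo x k).symm

lemma integral_step_unit (k : ℤ) : ∫ t in (k : ℝ)..(k + 1), step x t = x k := by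
  rw [intervalIntegral.integral_congr_Ioo_of_le (by linarith) (step_eqOn_Ioo x k)]
  simp

lemma intervalIntegrable_step_add_nat (m : ℤ) (n : ℕ) :
    IntervalIntegrable (step x) volume (m : ℝ) (m + n) := by
  simpa using IntervalIntegrable.trans_iterate (a := fun i : ℕ => (m : ℝ) + i) (n := n)
    fun i _ => by simpa [add_assoc] using intervalIntegrable_step_unit x (m + i)

lemma intervalIntegrable_step (a b : ℝ) : IntervalIntegrable (step x) volume a b := by
  set m := ⌊min a b⌋
  set n := ⌈max a b - m⌉₊
  refine (intervalIntegrable_step_add_nat x m n).mono_set ?_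
  have hm : (m : ℝ) ≤ min a b := Int.floor_le _
  have hn : max a b ≤ m + n := by linarith [Nat.le_ceil (max a b - m)]
  rw [Set.uIcc_of_le (a := (m : ℝ)) (le_add_of_nonneg_right n.cast_nonneg)]
  exact Set.uIcc_subset_Icc ⟨hm.trans (min_le_left _ _), (le_max_left _ _).trans hn⟩
    ⟨hm.trans (min_le_right _ _), (le_max_right _ _).trans hn⟩

lemma integral_step_add_nat (m : ℤ) (n : ℕ) :
    ∫ t in (m : ℝ)..(m + n), step x t = ∑ i ∈ Finset.range n, x (m + i) := by
  have h := intervalIntegral.sum_integral_adjacent_intervals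
    (a := fun i : ℕ => (m : ℝ) + i) (n := n) (f := step x) (μ := volume)
    fun i _ => by simpa [add_assoc] using intervalIntegrable_step_unit x (m + i)
  simp only [Nat.cast_zero, add_zero] at h
  rw [← h]
  refine Finset.sum_congr rfl fun i _ => ?_
  simpa [add_assoc] using integral_step_unit x (m + i)

variable {x}

lemma cast_toNat_floor_add_one_sub_floor {s t : ℝ} (hst : s ≤ t) :
    (((⌊t⌋ + 1 - ⌊s⌋).toNat : ℕ) : ℝ) = ⌊t⌋ + 1 - ⌊s⌋ := by
  exact_mod_cast Int.toNat_of_nonneg (by linarith [Int.floor_le_floor hst])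

lemma integral_step_le_sum (hx : 0 ≤ x) {s t : ℝ} (hst : s ≤ t) :
    ∫ τ in s..t, step x τ ≤ ∑ i ∈ Finset.range (⌊t⌋ + 1 - ⌊s⌋).toNat, x (⌊s⌋ + i) := by
  rw [← integral_step_add_nat]
  refine intervalIntegral.integral_mono_interval (Int.floor_le s) hst ?_
    (Filter.Eventually.of_forall fun τ => hx _) (intervalIntegrable_step x _ _)
  rw [cast_toNat_floor_add_one_sub_floor hst]
  linarith [Int.lt_floor_add_one t]

lemma integral_step_le_length (hx : ∀ j, x j ≤ 1) {s t : ℝ} (hst : s ≤ t) :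
    ∫ τ in s..t, step x τ ≤ t - s := by
  calc ∫ τ in s..t, step x τ ≤ ∫ _ in s..t, (1 : ℝ) :=
        intervalIntegral.integral_mono_on hst (intervalIntegrable_step x s t)
          intervalIntegrable_const fun τ _ => hx _
    _ = t - s := by simp

lemma abs_step_rpow {p : ℝ} (hp : p ≠ 0) (hx : ∀ j, x j = 0 ∨ x j = 1) (t : ℝ) :
    |step x t| ^ p = step x t := by
  rcases hx ⌊t⌋ with h | h <;> simp [step, h, Real.zero_rpow hp]

end StepFunction

section FloorRpow

variable {α : ℝ}

lemma rpow_max_zero_sub_le (hα₀ : 0 ≤ α) (hα₁ : α ≤ 1) {s t : ℝ} (hst : s ≤ t) :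
    max t 0 ^ α - max s 0 ^ α ≤ (t - s) ^ α := by
  have hmax : max t 0 ≤ max s 0 + (t - s) := max_le (by linarith [le_max_left s 0])
    (by linarith [le_max_right s 0])
  have := Real.rpow_le_rpow (le_max_right t 0) hmax hα₀
  have := Real.rpow_add_le_add_rpow (le_max_right s 0) (sub_nonneg.2 hst) hα₀ hα₁
  linarith

lemma rpow_max_zero_mono (hα₀ : 0 ≤ α) : Monotone fun t : ℝ => max t 0 ^ α :=
  fun _ _ hst => Real.rpow_le_rpow (le_max_right _ 0) (max_le_max_right 0 hst) hα₀

-- `max _ 0` keeps `Real.rpow` away from negative bases.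
noncomputable def floorRpow (α : ℝ) (j : ℤ) : ℤ := ⌊max (j : ℝ) 0 ^ α⌋

noncomputable def floorRpowGap (α : ℝ) (j : ℤ) : ℝ := floorRpow α (j + 1) - floorRpow α j

lemma floorRpowGap_eq_zero_or_one (hα₀ : 0 ≤ α) (hα₁ : α ≤ 1) (j : ℤ) :
    floorRpowGap α j = 0 ∨ floorRpowGap α j = 1 := by
  have hmono : floorRpow α j ≤ floorRpow α (j + 1) :=
    Int.floor_le_floor (rpow_max_zero_mono hα₀ (by push_cast; linarith))
  have hjump : floorRpow α (j + 1) ≤ floorRpow α j + 1 := by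
    rw [floorRpow, floorRpow, ← Int.floor_add_one]
    refine Int.floor_le_floor ?_
    have := rpow_max_zero_sub_le hα₀ hα₁ (le_add_of_nonneg_right zero_le_one : (j : ℝ) ≤ j + 1)
    push_cast
    simp only [add_sub_cancel_left, Real.one_rpow] at this
    linarith
  unfold floorRpowGap
  obtain h | h : floorRpow α (j + 1) = floorRpow α j ∨ floorRpow α (j + 1) = floorRpow α j + 1 :=
    by omega
  all_goals simp [h]

lemma sum_floorRpowGap (m : ℤ) (n : ℕ) :
    ∑ i ∈ Finset.range n, floorRpowGap α (m + i) = floorRpow α (m + n) - floorRpow α m := by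
  have := Finset.sum_range_sub (fun i : ℕ => (floorRpow α (m + i) : ℝ)) n
  simpa [floorRpowGap, add_assoc] using this

lemma sum_floorRpowGap_le (hα₀ : 0 ≤ α) (hα₁ : α ≤ 1) (m : ℤ) (n : ℕ) :
    ∑ i ∈ Finset.range n, floorRpowGap α (m + i) ≤ (n : ℝ) ^ α + 1 := by
  rw [sum_floorRpowGap]
  have := rpow_max_zero_sub_le hα₀ hα₁ (le_add_of_nonneg_right n.cast_nonneg : (m : ℝ) ≤ m + n)
  have := Int.floor_le (max ((m + n : ℤ) : ℝ) 0 ^ α)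
  have := Int.sub_one_lt_floor (max (m : ℝ) 0 ^ α)
  simp only [floorRpow, add_sub_cancel_left, Int.cast_add, Int.cast_natCast] at *
  linarith

lemma sum_floorRpowGap_zero (hα : α ≠ 0) (n : ℕ) :
    ∑ i ∈ Finset.range n, floorRpowGap α i = ⌊(n : ℝ) ^ α⌋ := by
  simpa [floorRpow, Real.zero_rpow hα] using sum_floorRpowGap (α := α) 0 n

end FloorRpow

section Morrey

lemma ofReal_le_mnormR (p q : ℝ) (f : ℝ → ℝ) (a : ℝ) {r : ℝ} (hr : 0 < r) :
    ENNReal.ofReal ((2 * r) ^ (1 / q - 1 / p) * (∫ t in (a - r)..(a + r), |f t| ^ p) ^ (1 / p))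
      ≤ mnormR p q f :=
  le_iSup₂ (f := fun a (r : Set.Ioi (0 : ℝ)) => ENNReal.ofReal ((2 * r.1) ^ (1 / q - 1 / p) *
    (∫ t in (a - r.1)..(a + r.1), |f t| ^ p) ^ (1 / p))) a ⟨r, hr⟩

variable {p q α : ℝ}

lemma morrey_term_le (hp : 0 < p) (hq : 0 < q) (hα : α ≤ 1 - p / q) {C L I : ℝ} (hC : 1 ≤ C)
    (hL : 0 < L) (hI₀ : 0 ≤ I) (hIL : I ≤ L) (hIC : 1 ≤ L → I ≤ C * L ^ α) :
    L ^ (1 / q - 1 / p) * I ^ (1 / p) ≤ C ^ (1 / p) := by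
  have hC' : 1 ≤ C ^ (1 / p) := Real.one_le_rpow hC (by positivity)
  rcases le_total L 1 with hL₁ | hL₁
  · calc L ^ (1 / q - 1 / p) * I ^ (1 / p)
        ≤ L ^ (1 / q - 1 / p) * L ^ (1 / p) := by gcongr
      _ = L ^ (1 / q) := by rw [← Real.rpow_add hL]; ring_nf
      _ ≤ 1 := Real.rpow_le_one hL.le hL₁ (by positivity)
      _ ≤ C ^ (1 / p) := hC'
  · have hexp : 1 / q - 1 / p + α * (1 / p) ≤ 0 := by
      have : α * (1 / p) ≤ (1 - p / q) * (1 / p) := by gcongr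
      have : (1 - p / q) * (1 / p) = 1 / p - 1 / q := by field_simp
      linarith
    calc L ^ (1 / q - 1 / p) * I ^ (1 / p)
        ≤ L ^ (1 / q - 1 / p) * (C * L ^ α) ^ (1 / p) := by gcongr; exact hIC hL₁
      _ = C ^ (1 / p) * L ^ (1 / q - 1 / p + α * (1 / p)) := by
        rw [Real.mul_rpow (by linarith) (by positivity), ← Real.rpow_mul hL.le,
          Real.rpow_add hL]
        ring
      _ ≤ C ^ (1 / p) * 1 := by gcongr; exact Real.rpow_le_one_of_one_le_of_nonpos hL₁ hexp
      _ = C ^ (1 / p) := mul_one _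

lemma mnormR_le_of_integral_le (hp : 0 < p) (hq : 0 < q) (hα : α ≤ 1 - p / q) {C : ℝ}
    (hC : 1 ≤ C) {f : ℝ → ℝ}
    (hle : ∀ a r, 0 < r → ∫ t in (a - r)..(a + r), |f t| ^ p ≤ 2 * r)
    (hgrowth : ∀ a r, 1 ≤ 2 * r → ∫ t in (a - r)..(a + r), |f t| ^ p ≤ C * (2 * r) ^ α) :
    mnormR p q f ≤ ENNReal.ofReal (C ^ (1 / p)) := by
  refine iSup₂_le fun a r => ENNReal.ofReal_le_ofReal ?_
  have hr : 0 < r.1 := r.2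
  exact morrey_term_le hp hq hα hC (by linarith)
    (intervalIntegral.integral_nonneg (by linarith) fun t _ => by positivity)
    (hle a r hr) (hgrowth a r)

lemma mnormR_eq_top_of_frequently (hp : 0 < p) (hq : 0 < q) (hα : 1 - p / q < α) {c : ℝ}
    (hc : 0 < c) {f : ℝ → ℝ}
    (hgrowth : ∃ᶠ r in atTop, ∃ a, c * (2 * r) ^ α ≤ ∫ t in (a - r)..(a + r), |f t| ^ p) :
    mnormR p q f = ⊤ := by
  set ε := 1 / q - 1 / p + α * (1 / p)
  have hε : 0 < ε := by
    have : (1 - p / q) * (1 / p) < α * (1 / p) := by gcongr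
    have : (1 - p / q) * (1 / p) = 1 / p - 1 / q := by field_simp
    linarith
  have hlim : Tendsto (fun r : ℝ => c ^ (1 / p) * (2 * r) ^ ε) atTop atTop :=
    ((tendsto_rpow_atTop hε).comp (tendsto_id.const_mul_atTop two_pos)).const_mul_atTop
      (by positivity)
  refine ENNReal.eq_top_of_forall_nnreal_le fun B => ?_
  obtain ⟨r, ⟨a, ha⟩, hr, hB⟩ :=
    (hgrowth.and_eventually ((eventually_gt_atTop 0).and (hlim.eventually_ge_atTop B))).exists
  refine (ENNReal.ofReal_coe_nnreal (p := B)).symm.trans_le ?_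
  refine (ENNReal.ofReal_le_ofReal ?_).trans (ofReal_le_mnormR p q f a hr)
  calc (B : ℝ) ≤ c ^ (1 / p) * (2 * r) ^ ε := hB
    _ = (2 * r) ^ (1 / q - 1 / p) * (c * (2 * r) ^ α) ^ (1 / p) := by
      rw [Real.mul_rpow hc.le (by positivity), ← Real.rpow_mul (by positivity),
        Real.rpow_add (by positivity)]
      ring
    _ ≤ _ := by gcongr

end Morrey

section FloorRpowGapStep

variable {α : ℝ}

lemma integral_step_floorRpowGap_le (hα₀ : 0 ≤ α) (hα₁ : α ≤ 1) {s t : ℝ} (hst : 1 ≤ t - s) :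
    ∫ τ in s..t, step (floorRpowGap α) τ ≤ 4 * (t - s) ^ α := by
  set n := (⌊t⌋ + 1 - ⌊s⌋).toNat
  have hn : (n : ℝ) ≤ 3 * (t - s) := by
    rw [cast_toNat_floor_add_one_sub_floor (by linarith)]
    linarith [Int.floor_le t, Int.sub_one_lt_floor s]
  have hpow : (n : ℝ) ^ α ≤ 3 * (t - s) ^ α :=
    calc (n : ℝ) ^ α ≤ (3 * (t - s)) ^ α := by gcongr
      _ = 3 ^ α * (t - s) ^ α := Real.mul_rpow (by norm_num) (by linarith)
      _ ≤ 3 * (t - s) ^ α := by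
        gcongr
        exact Real.rpow_le_self_of_one_le (by norm_num) hα₁
  have hone : 1 ≤ (t - s) ^ α := Real.one_le_rpow hst hα₀
  calc ∫ τ in s..t, step (floorRpowGap α) τ
      ≤ ∑ i ∈ Finset.range n, floorRpowGap α (⌊s⌋ + i) :=
        integral_step_le_sum (fun j => (floorRpowGap_eq_zero_or_one hα₀ hα₁ j).elim (·.ge)
          (·.symm ▸ zero_le_one)) (by linarith)
    _ ≤ (n : ℝ) ^ α + 1 := sum_floorRpowGap_le hα₀ hα₁ _ _
    _ ≤ 4 * (t - s) ^ α := by linarith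

lemma half_rpow_le_integral_step_floorRpowGap (hα₀ : 0 < α) {n : ℕ} (hn : 1 ≤ n) :
    1 / 2 * (n : ℝ) ^ α ≤ ∫ τ in (0 : ℝ)..n, step (floorRpowGap α) τ := by
  have h := integral_step_add_nat (floorRpowGap α) 0 n
  simp only [Int.cast_zero, zero_add] at h
  rw [h, sum_floorRpowGap_zero hα₀.ne']
  have hy : 1 ≤ (n : ℝ) ^ α := Real.one_le_rpow (by exact_mod_cast hn) hα₀.le
  have h₁ : (1 : ℝ) ≤ ⌊(n : ℝ) ^ α⌋ := by exact_mod_cast Int.le_floor.2 (by simpa using hy)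
  linarith [Int.lt_floor_add_one ((n : ℝ) ^ α)]

end FloorRpowGapStep

theorem stmt14 (p₁ p₂ q : ℝ) (hp₁ : 1 ≤ p₁) (h12 : p₁ < p₂) (h2q : p₂ ≤ q) :
    ∃ x : ℤ → ℝ, (∀ j, x j = 0 ∨ x j = 1) ∧
      mnormR p₁ q (step x) ≠ ⊤ ∧ mnormR p₂ q (step x) = ⊤ := by
  have hq : 0 < q := by linarith
  obtain ⟨α, hαp₂, hαp₁⟩ : ∃ α, 1 - p₂ / q < α ∧ α < 1 - p₁ / q :=
    exists_between (by gcongr)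
  have hα₀ : 0 < α := by linarith [(div_le_one hq).2 h2q]
  have hα₁ : α ≤ 1 := by linarith [div_pos (by linarith : 0 < p₁) hq]
  have hx := floorRpowGap_eq_zero_or_one hα₀.le hα₁
  have habs (p : ℝ) (hp : 0 < p) :
      (fun t => |step (floorRpowGap α) t| ^ p) = step (floorRpowGap α) :=
    funext (abs_step_rpow hp.ne' hx)
  refine ⟨floorRpowGap α, hx, ?_, ?_⟩
  · have hle a r (hr : 0 < r) :
        ∫ t in (a - r)..(a + r), |step (floorRpowGap α) t| ^ p₁ ≤ 2 * r := by
      simpa [habs p₁ (by linarith), two_mul, add_sub_sub_cancel] using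
        integral_step_le_length (fun j => (hx j).elim (·.le.trans zero_le_one) (·.le))
          (by linarith : a - r ≤ a + r)
    have hgrowth a r (hr : 1 ≤ 2 * r) :
        ∫ t in (a - r)..(a + r), |step (floorRpowGap α) t| ^ p₁ ≤ 4 * (2 * r) ^ α := by
      simpa [habs p₁ (by linarith), two_mul, add_sub_sub_cancel] using
        integral_step_floorRpowGap_le hα₀.le hα₁ (by linarith : 1 ≤ a + r - (a - r))
    exact ((mnormR_le_of_integral_le (by linarith) hq hαp₁.le (by norm_num) hle hgrowth).trans_lt
      ENNReal.ofReal_lt_top).ne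
  · refine mnormR_eq_top_of_frequently (by linarith) hq hαp₂ (c := 1 / 2) (by norm_num) ?_
    refine frequently_atTop.2 fun M => ?_
    obtain ⟨n, hn⟩ := exists_nat_ge (2 * M)
    refine ⟨(n + 1 : ℕ) / 2, by push_cast; linarith, (n + 1 : ℕ) / 2, ?_⟩
    simpa [habs p₂ (by linarith), mul_div_cancel₀] using
      half_rpow_le_integral_step_floorRpowGap hα₀ (Nat.le_add_left 1 n)
end
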